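/- arXiv:0912.5537 — 6 statements merged into one kernel-verified Lean document; each statement's English description precedes it below -/
import Mathlib

section
/- For a probability distribution p on a d-letter alphabet and a type t of length-n strings, the i.i.d. probability p^{⊗n} assigned to the set T_t of strings of type t satisfies (n+1)^{-d} * exp(-n*D(t̄‖p)) ≤ p^{⊗n}(T_t) ≤ exp(-n*D(t̄‖p)), where D is the relative entropy (in nats) and t̄ = t/n. -/
open Finset

section aux
variable {d n : ℕ}

private def typ (x : Fin n → Fin d) (i : Fin d) : ℕ :=
  (univ.filter fun j => x j = i).card

private lemma sum_typ (x : Fin n → Fin d) : ∑ i, typ x i = n := by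
  have := Finset.card_eq_sum_card_fiberwise
    (f := x) (s := (univ : Finset (Fin n))) (t := univ) (fun j _ => mem_univ _)
  simpa [typ] using this.symm

private lemma prod_typ {α : Type*} [CommMonoid α] (f : Fin d → α) (x : Fin n → Fin d) :
    ∏ j, f (x j) = ∏ i, f i ^ typ x i := by
  rw [← Finset.prod_fiberwise_of_maps_to (g := x) (t := univ)
    (fun j _ => mem_univ _) (fun j => f (x j))]
  refine Finset.prod_congr rfl fun i _ => ?_
  rw [Finset.prod_congr rfl (fun j hj => by rw [(mem_filter.mp hj).2]),
    Finset.prod_const, typ]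

private lemma sum_all (f : Fin d → ℝ) :
    ∑ x : Fin n → Fin d, ∏ j, f (x j) = (∑ i, f i) ^ n := by
  have := Finset.prod_univ_sum (fun _ : Fin n => (univ : Finset (Fin d)))
    (fun _ i => f i)
  rw [Fintype.piFinset_univ] at this
  rw [← this, Finset.prod_const, Finset.card_univ, Fintype.card_fin]

end aux

private def fstFiber {ι : Type*} {β : ι → Type*} (i : ι) :
    {p : Σ j, β j // p.1 = i} ≃ β i where
  toFun p := p.2 ▸ p.1.2
  invFun b := ⟨⟨i, b⟩, rfl⟩
  left_inv := by rintro ⟨⟨j, b⟩, rfl⟩; rfl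
  right_inv b := rfl

private lemma card_type_class (d n : ℕ) (s : Fin d → ℕ) (hs : ∑ i, s i = n) :
    (univ.filter fun x : Fin n → Fin d =>
      ∀ i, (univ.filter fun j => x j = i).card = s i).card
      * ∏ i, (s i).factorial = n.factorial := by
  classical
  set T := {x : Fin n → Fin d // ∀ i, (univ.filter fun j => x j = i).card = s i} with hT
  have hcc : Fintype.card (Σ i, Fin (s i)) ≤ Fintype.card (Fin n) := by
    simp [Fintype.card_sigma, hs]
  let Φ : (Σ x : T, ∀ i, ({j // x.1 j = i} ≃ Fin (s i))) → (Fin n ≃ Σ i, Fin (s i)) :=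
    fun ω =>
      have hli : Function.LeftInverse (fun q : Σ i, Fin (s i) => ((ω.2 q.1).symm q.2).1)
          (fun j => (⟨ω.1.1 j, ω.2 (ω.1.1 j) ⟨j, rfl⟩⟩ : Σ i, Fin (s i))) := fun j => by simp
      { toFun := fun j => ⟨ω.1.1 j, ω.2 (ω.1.1 j) ⟨j, rfl⟩⟩
        invFun := fun q => ((ω.2 q.1).symm q.2).1
        left_inv := hli
        right_inv := hli.rightInverse_of_card_le hcc }
  have hΦ : Function.Bijective Φ := by
    constructor
    · rintro ⟨⟨x, hx⟩, f⟩ ⟨⟨x', hx'⟩, f'⟩ h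
      have h0 : ∀ j, (⟨x j, f (x j) ⟨j, rfl⟩⟩ : Σ i, Fin (s i))
          = ⟨x' j, f' (x' j) ⟨j, rfl⟩⟩ := fun j => Equiv.ext_iff.mp h j
      have hxx : x = x' := funext fun j => (Sigma.mk.inj_iff.mp (h0 j)).1
      subst hxx
      have hf : f = f' := by
        funext i
        apply Equiv.ext
        rintro ⟨j, hj⟩
        subst hj
        exact eq_of_heq (Sigma.mk.inj_iff.mp (h0 j)).2
      subst hf
      rfl
    · intro e
      have hx : ∀ i, (univ.filter fun j => (e j).1 = i).card = s i := by
        intro i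
        rw [← Fintype.card_subtype]
        rw [Fintype.card_congr ((e.subtypeEquiv fun j => Iff.rfl).trans
          (fstFiber (β := fun i => Fin (s i)) i))]
        exact Fintype.card_fin _
      refine ⟨⟨⟨fun j => (e j).1, hx⟩,
        fun i => (e.subtypeEquiv fun j => Iff.rfl).trans (fstFiber i)⟩, ?_⟩
      apply Equiv.ext
      intro j
      rfl
  have hcard := Fintype.card_of_bijective hΦ
  have h1 : Fintype.card (Fin n ≃ Σ i, Fin (s i)) = n.factorial := by
    have hc : Fintype.card (Σ i, Fin (s i)) = n := by simp [Fintype.card_sigma, hs]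
    rw [Fintype.card_equiv (Fintype.equivFinOfCardEq hc).symm, Fintype.card_fin]
  have h2 : Fintype.card (Σ x : T, ∀ i, ({j // x.1 j = i} ≃ Fin (s i)))
      = (univ.filter fun x : Fin n → Fin d =>
          ∀ i, (univ.filter fun j => x j = i).card = s i).card * ∏ i, (s i).factorial := by
    rw [Fintype.card_sigma]
    have hterm : ∀ x : T, Fintype.card (∀ i, ({j // x.1 j = i} ≃ Fin (s i)))
        = ∏ i, (s i).factorial := by
      intro x
      rw [Fintype.card_pi]
      refine Finset.prod_congr rfl fun i _ => ?_
      have hfib : Fintype.card {j // x.1 j = i} = s i := by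
        rw [Fintype.card_subtype]; exact x.2 i
      rw [Fintype.card_equiv (Fintype.equivFinOfCardEq hfib), hfib]
    rw [Finset.sum_congr rfl fun x _ => hterm x, Finset.sum_const, Finset.card_univ,
      Fintype.card_subtype, smul_eq_mul]
  rw [h2, h1] at hcard
  exact hcard

private lemma fact_mul_pow_le (a b : ℕ) :
    a.factorial * a ^ b ≤ b.factorial * a ^ a := by
  rcases le_total a b with h | h
  · have key : a.factorial * a ^ (b - a) ≤ b.factorial := by
      induction b, h using Nat.le_induction with
      | base => simp
      | succ m hm ih =>
        have h1 : m + 1 - a = (m - a) + 1 := by omega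
        rw [h1, pow_succ, ← mul_assoc, Nat.factorial_succ, mul_comm (m + 1)]
        exact Nat.mul_le_mul ih (by omega)
    calc a.factorial * a ^ b = a.factorial * a ^ (b - a) * a ^ a := by
          rw [mul_assoc, ← pow_add]; congr 2; omega
      _ ≤ b.factorial * a ^ a := Nat.mul_le_mul_right _ key
  · have key : ∀ m, b ≤ m → m.factorial ≤ b.factorial * m ^ (m - b) := by
      intro m hm
      induction m, hm using Nat.le_induction with
      | base => simp
      | succ k hk ih =>
        have h1 : k + 1 - b = (k - b) + 1 := by omega
        rw [Nat.factorial_succ, h1, pow_succ]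
        calc (k + 1) * k.factorial ≤ (k + 1) * (b.factorial * k ^ (k - b)) :=
              Nat.mul_le_mul_left _ ih
          _ ≤ (k + 1) * (b.factorial * (k + 1) ^ (k - b)) := by
              exact Nat.mul_le_mul_left _ (Nat.mul_le_mul_left _
                (Nat.pow_le_pow_left (by omega) _))
          _ = b.factorial * ((k + 1) ^ (k - b) * (k + 1)) := by ring
    calc a.factorial * a ^ b ≤ b.factorial * a ^ (a - b) * a ^ b :=
          Nat.mul_le_mul_right _ (key a h)
      _ = b.factorial * a ^ a := by rw [mul_assoc, ← pow_add]; congr 2; omega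

private lemma card_mul_pow_le (d n : ℕ) (s t : Fin d → ℕ)
    (hs : ∑ i, s i = n) (ht : ∑ i, t i = n) :
    (univ.filter fun x : Fin n → Fin d =>
        ∀ i, (univ.filter fun j => x j = i).card = s i).card * ∏ i, t i ^ s i ≤
    (univ.filter fun x : Fin n → Fin d =>
        ∀ i, (univ.filter fun j => x j = i).card = t i).card * ∏ i, t i ^ t i := by
  set A := (univ.filter fun x : Fin n → Fin d =>
        ∀ i, (univ.filter fun j => x j = i).card = s i).card
  set B := (univ.filter fun x : Fin n → Fin d =>
        ∀ i, (univ.filter fun j => x j = i).card = t i).card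
  have h1 : A * ∏ i, (s i).factorial = n.factorial := card_type_class d n s hs
  have h2 : B * ∏ i, (t i).factorial = n.factorial := card_type_class d n t ht
  have hpos : 0 < (∏ i, (s i).factorial) * ∏ i, (t i).factorial :=
    Nat.mul_pos (Finset.prod_pos fun i _ => Nat.factorial_pos _)
      (Finset.prod_pos fun i _ => Nat.factorial_pos _)
  refine Nat.le_of_mul_le_mul_right ?_ hpos
  calc A * (∏ i, t i ^ s i) * ((∏ i, (s i).factorial) * ∏ i, (t i).factorial)
      = (A * ∏ i, (s i).factorial) * ∏ i, (t i).factorial * (t i ^ s i) := by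
        rw [Finset.prod_mul_distrib]; ring
    _ = n.factorial * ∏ i, (t i).factorial * (t i ^ s i) := by rw [h1]
    _ ≤ n.factorial * ∏ i, (s i).factorial * (t i ^ t i) := by
        refine Nat.mul_le_mul_left _ (Finset.prod_le_prod' fun i _ => ?_)
        exact fact_mul_pow_le (t i) (s i)
    _ = (B * ∏ i, (t i).factorial) * ∏ i, (s i).factorial * (t i ^ t i) := by rw [h2]
    _ = B * (∏ i, t i ^ t i) * ((∏ i, (s i).factorial) * ∏ i, (t i).factorial) := by
        rw [Finset.prod_mul_distrib]; ring

private def truncF (d n : ℕ) (s : Fin d → ℕ) (i : Fin d) : Fin (n + 1) :=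
  ⟨min (s i) n, Nat.lt_succ_of_le (min_le_right _ _)⟩

private lemma card_image_typ_le (d n : ℕ) :
    ((univ : Finset (Fin n → Fin d)).image typ).card ≤ (n + 1) ^ d := by
  have hmem : ∀ s ∈ (univ : Finset (Fin n → Fin d)).image typ, ∀ i, s i ≤ n := by
    rintro s hs i
    obtain ⟨x, -, rfl⟩ := Finset.mem_image.mp hs
    calc typ x i ≤ (univ : Finset (Fin n)).card := Finset.card_filter_le _ _
      _ = n := by simp
  calc ((univ : Finset (Fin n → Fin d)).image typ).card
      ≤ (univ : Finset (Fin d → Fin (n + 1))).card := by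
        refine Finset.card_le_card_of_injOn (truncF d n)
          (fun s _ => mem_univ _) ?_
        intro s hs s' hs' h
        funext i
        have h1 := congrFun h i
        have h2 : min (s i) n = min (s' i) n := congrArg Fin.val h1
        have := hmem s (by simpa using hs) i
        have := hmem s' (by simpa using hs') i
        omega
    _ = (n + 1) ^ d := by
        rw [Finset.card_univ, Fintype.card_fun]; simp


private lemma sum_prod_filter (d n : ℕ) (f : Fin d → ℝ) (s : Fin d → ℕ) :
    ∑ x ∈ (univ.filter fun x : Fin n → Fin d =>
        ∀ i, (univ.filter fun j => x j = i).card = s i), ∏ j, f (x j)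
    = ((univ.filter fun x : Fin n → Fin d =>
        ∀ i, (univ.filter fun j => x j = i).card = s i).card : ℝ) * ∏ i, f i ^ s i := by
  rw [Finset.sum_congr rfl (fun x hx => ?_), Finset.sum_const, nsmul_eq_mul]
  rw [prod_typ f x]
  exact Finset.prod_congr rfl fun i _ => by
    simp only [typ]
    rw [(Finset.mem_filter.mp hx).2 i]

/-- probability of a type class under an i.i.d. source:
`(n+1)^{-d} exp(-n D(t̄‖p)) ≤ p^{⊗n}(T_t) ≤ exp(-n D(t̄‖p))`. -/
theorem prob_type_class_bounds (d n : ℕ) (hd : 0 < d) (hn : 0 < n)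
    (p : Fin d → ℝ) (hp : ∀ i, 0 < p i) (hp1 : ∑ i, p i = 1)
    (t : Fin d → ℕ) (ht : ∑ i, t i = n) :
    let Tt : Finset (Fin n → Fin d) :=
      Finset.univ.filter fun x => ∀ i, (Finset.univ.filter fun j => x j = i).card = t i
    let D : ℝ := ∑ i, ((t i : ℝ) / n) * Real.log (((t i : ℝ) / n) / p i)
    ((n + 1 : ℝ) ^ d)⁻¹ * Real.exp (-(n : ℝ) * D) ≤ (∑ x ∈ Tt, ∏ j, p (x j)) ∧
    (∑ x ∈ Tt, ∏ j, p (x j)) ≤ Real.exp (-(n : ℝ) * D) := by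
  intro Tt D
  have hn' : (n : ℝ) ≠ 0 := Nat.cast_ne_zero.mpr hn.ne'
  set q : Fin d → ℝ := fun i => (t i : ℝ) / n with hqdef
  have hq0 : ∀ i, 0 ≤ q i := fun i => by positivity
  have hqsum : ∑ i, q i = 1 := by
    rw [hqdef, ← Finset.sum_div]
    rw [← Nat.cast_sum, ht, div_self hn']
  set P : ℝ := ∏ i, p i ^ t i with hPdef
  set Qt : ℝ := ∏ i, q i ^ t i with hQtdef
  have hPpos : 0 < P := Finset.prod_pos fun i _ => pow_pos (hp i) _
  have hQtpos : 0 < Qt := by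
    refine Finset.prod_pos fun i _ => ?_
    rcases Nat.eq_zero_or_pos (t i) with h | h
    · simp [h]
    · have : (0:ℝ) < q i := by
        rw [hqdef]
        have : (0:ℝ) < (t i : ℝ) := by exact_mod_cast h
        positivity
      exact pow_pos this _
  have hTt : Tt = univ.filter
      (fun x : Fin n → Fin d => ∀ i, (univ.filter fun j => x j = i).card = t i) := rfl
  have hDdef : D = ∑ i, q i * Real.log (q i / p i) := rfl
  -- sums over the type class
  have hsum_p : ∑ x ∈ Tt, ∏ j, p (x j) = (Tt.card : ℝ) * P := by
    rw [hTt, sum_prod_filter, hPdef]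
  have hsum_q : ∑ x ∈ Tt, ∏ j, q (x j) = (Tt.card : ℝ) * Qt := by
    rw [hTt, sum_prod_filter, hQtdef]
  have htotal : ∑ x : Fin n → Fin d, ∏ j, q (x j) = 1 := by
    rw [sum_all, hqsum, one_pow]
  -- exponential identity
  have hE : Real.exp (-(n : ℝ) * D) = P / Qt := by
    have hD : -(n : ℝ) * D = ∑ i, (t i : ℝ) * Real.log (p i / q i) := by
      rw [hDdef, Finset.mul_sum]
      refine Finset.sum_congr rfl fun i _ => ?_
      have h1 : (n : ℝ) * q i = (t i : ℝ) := by rw [hqdef]; field_simp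
      rw [show p i / q i = (q i / p i)⁻¹ from (inv_div _ _).symm, Real.log_inv, ← h1]
      ring
    rw [hD, Real.exp_sum, hPdef, hQtdef, ← Finset.prod_div_distrib]
    refine Finset.prod_congr rfl fun i _ => ?_
    rcases Nat.eq_zero_or_pos (t i) with h | h
    · simp [h]
    · have hqi : (0:ℝ) < q i := by
        rw [hqdef]
        have : (0:ℝ) < (t i : ℝ) := by exact_mod_cast h
        positivity
      rw [Real.exp_nat_mul, Real.exp_log (div_pos (hp i) hqi), div_pow]
  -- upper bound half
  have hcardQ : (Tt.card : ℝ) * Qt ≤ 1 := by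
    rw [← hsum_q, ← htotal]
    exact Finset.sum_le_sum_of_subset_of_nonneg (Finset.subset_univ _)
      (fun x _ _ => Finset.prod_nonneg fun j _ => hq0 _)
  -- lower bound half
  have hlow : ((n + 1 : ℝ) ^ d)⁻¹ ≤ (Tt.card : ℝ) * Qt := by
    have hfib : ∑ s ∈ (univ : Finset (Fin n → Fin d)).image typ,
        ∑ x ∈ univ.filter (fun x => typ x = s), ∏ j, q (x j)
        = ∑ x : Fin n → Fin d, ∏ j, q (x j) :=
      Finset.sum_fiberwise_of_maps_to
        (fun x _ => Finset.mem_image_of_mem typ (mem_univ x)) _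
    have hterm : ∀ s ∈ (univ : Finset (Fin n → Fin d)).image typ,
        ∑ x ∈ univ.filter (fun x : Fin n → Fin d => typ x = s), ∏ j, q (x j)
          ≤ (Tt.card : ℝ) * Qt := by
      intro s hs
      obtain ⟨y, -, hy⟩ := Finset.mem_image.mp hs
      have hssum : ∑ i, s i = n := by rw [← hy]; exact sum_typ y
      have e1 : univ.filter (fun x : Fin n → Fin d => typ x = s)
          = univ.filter (fun x => ∀ i, (univ.filter fun j => x j = i).card = s i) := by
        refine Finset.filter_congr fun x _ => ?_
        simp only [typ, funext_iff]
      rw [e1, sum_prod_filter]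
      -- compare with the t type class
      have key : ∀ (u : Fin d → ℕ), (∑ i, u i = n) →
          ∏ i, q i ^ u i = (∏ i, (t i : ℝ) ^ u i) / (n : ℝ) ^ n := by
        intro u hu
        rw [hqdef]
        simp only [div_pow]
        rw [Finset.prod_div_distrib, Finset.prod_pow_eq_pow_sum, hu]
      have hN := card_mul_pow_le d n s t hssum ht
      have hNR : ((univ.filter fun x : Fin n → Fin d =>
            ∀ i, (univ.filter fun j => x j = i).card = s i).card : ℝ)
            * ∏ i, (t i : ℝ) ^ s i ≤
          ((univ.filter fun x : Fin n → Fin d =>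
            ∀ i, (univ.filter fun j => x j = i).card = t i).card : ℝ)
            * ∏ i, (t i : ℝ) ^ t i := by
        exact_mod_cast hN
      rw [key s hssum, hTt, hQtdef, key t ht]
      rw [mul_div_assoc', mul_div_assoc']
      gcongr
    have h1 : (1:ℝ) ≤ (((univ : Finset (Fin n → Fin d)).image typ).card : ℝ)
        * ((Tt.card : ℝ) * Qt) := by
      calc (1:ℝ) = ∑ x : Fin n → Fin d, ∏ j, q (x j) := htotal.symm
        _ = ∑ s ∈ (univ : Finset (Fin n → Fin d)).image typ,
              ∑ x ∈ univ.filter (fun x : Fin n → Fin d => typ x = s), ∏ j, q (x j) :=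
            hfib.symm
        _ ≤ ∑ _s ∈ (univ : Finset (Fin n → Fin d)).image typ, (Tt.card : ℝ) * Qt :=
            Finset.sum_le_sum hterm
        _ = (((univ : Finset (Fin n → Fin d)).image typ).card : ℝ)
              * ((Tt.card : ℝ) * Qt) := by
            rw [Finset.sum_const, nsmul_eq_mul]
    have h2 : (((univ : Finset (Fin n → Fin d)).image typ).card : ℝ)
          * ((Tt.card : ℝ) * Qt)
        ≤ (n + 1 : ℝ) ^ d * ((Tt.card : ℝ) * Qt) := by
      refine mul_le_mul_of_nonneg_right ?_ (by positivity)
      have hic := card_image_typ_le d n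
      calc (((univ : Finset (Fin n → Fin d)).image typ).card : ℝ)
          ≤ (((n + 1) ^ d : ℕ) : ℝ) := by exact_mod_cast hic
        _ = (n + 1 : ℝ) ^ d := by push_cast; ring
    have h4 : (1:ℝ) ≤ (n + 1 : ℝ) ^ d * ((Tt.card : ℝ) * Qt) := h1.trans h2
    calc ((n + 1 : ℝ) ^ d)⁻¹ = ((n + 1 : ℝ) ^ d)⁻¹ * 1 := (mul_one _).symm
      _ ≤ ((n + 1 : ℝ) ^ d)⁻¹ * ((n + 1 : ℝ) ^ d * ((Tt.card : ℝ) * Qt)) :=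
          mul_le_mul_of_nonneg_left h4 (by positivity)
      _ = (Tt.card : ℝ) * Qt := by
          rw [← mul_assoc, inv_mul_cancel₀ (by positivity), one_mul]
  have heq : ((Tt.card : ℝ) * Qt) * (P / Qt) = (Tt.card : ℝ) * P := by
    rw [mul_assoc, mul_comm Qt, div_mul_cancel₀ _ hQtpos.ne']
  constructor
  · rw [hE, hsum_p]
    calc ((n + 1 : ℝ) ^ d)⁻¹ * (P / Qt) ≤ ((Tt.card : ℝ) * Qt) * (P / Qt) :=
        mul_le_mul_of_nonneg_right hlow (le_of_lt (div_pos hPpos hQtpos))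
      _ = (Tt.card : ℝ) * P := heq
  · rw [hE, hsum_p]
    calc (Tt.card : ℝ) * P = ((Tt.card : ℝ) * Qt) * (P / Qt) := heq.symm
      _ ≤ 1 * (P / Qt) :=
        mul_le_mul_of_nonneg_right hcardQ (le_of_lt (div_pos hPpos hQtpos))
      _ = P / Qt := one_mul _
end

section
/- Pinsker's inequality: for probability distributions p, q on a finite set, the relative entropy satisfies D(q‖p) ≥ (1/2)‖p − q‖_1², where ‖·‖_1 is the total (ℓ¹) variation and D is in nats. -/
/-!
Pointwise, `q log (q / p) + p - q = p klFun (q / p) ≥ 3 (p - q)² / (2 (q + 2 p))`: the function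
`klFun t - 3 (t - 1)² / (2 (t + 2))` vanishes at `1` and its derivative has the sign of `t - 1`,
by the Padé bound `log t ≥ 2 (t - 1) / (t + 1)` for `t ≥ 1` (reversed for `t ≤ 1`).
Summing, the linear terms cancel, and Cauchy–Schwarz with the weights `q i + 2 p i`, which sum
to `3`, gives `(∑ |p i - q i|)² ≤ 3 ∑ (p i - q i)² / (q i + 2 p i)`.
-/

open Real Set InformationTheory

lemma isMinOn_of_hasDerivAt_of_sub_mul_nonneg {f f' : ℝ → ℝ} {s : Set ℝ} {a : ℝ}
    (hs : s.OrdConnected) (ha : a ∈ s) (hf : ∀ x ∈ s, HasDerivAt f (f' x) x)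
    (hsign : ∀ x ∈ s, 0 ≤ (x - a) * f' x) : IsMinOn f s a := by
  intro x hx
  have hderiv (y z : ℝ) (hy : y ∈ s) (hz : z ∈ s) : ∀ u ∈ Icc y z, HasDerivAt f (f' u) u :=
    fun u hu ↦ hf u (hs.out hy hz hu)
  rcases le_total a x with hax | hxa
  · refine monotoneOn_of_hasDerivWithinAt_nonneg (convex_Icc a x)
      (fun u hu ↦ (hderiv a x ha hx u hu).continuousAt.continuousWithinAt)
      (fun u hu ↦ (hderiv a x ha hx u (interior_subset hu)).hasDerivWithinAt) (fun u hu ↦ ?_)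
      (left_mem_Icc.2 hax) (right_mem_Icc.2 hax) hax
    rw [interior_Icc] at hu
    exact nonneg_of_mul_nonneg_right (hsign u (hs.out ha hx (Ioo_subset_Icc_self hu)))
      (sub_pos.2 hu.1)
  · refine antitoneOn_of_hasDerivWithinAt_nonpos (convex_Icc x a)
      (fun u hu ↦ (hderiv x a hx ha u hu).continuousAt.continuousWithinAt)
      (fun u hu ↦ (hderiv x a hx ha u (interior_subset hu)).hasDerivWithinAt) (fun u hu ↦ ?_)
      (left_mem_Icc.2 hxa) (right_mem_Icc.2 hxa) hxa
    rw [interior_Icc] at hu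
    exact nonpos_of_mul_nonneg_right (hsign u (hs.out hx ha (Ioo_subset_Icc_self hu)))
      (sub_neg.2 hu.2)

lemma monotoneOn_log_sub_two_mul_sub_one_div_add_one :
    MonotoneOn (fun t ↦ log t - 2 * (t - 1) / (t + 1)) (Ioi 0) := by
  have hderiv (t : ℝ) (ht : 0 < t) :
      HasDerivAt (fun t ↦ log t - 2 * (t - 1) / (t + 1)) ((t - 1) ^ 2 / (t * (t + 1) ^ 2)) t := by
    refine ((hasDerivAt_log ht.ne').sub ((((hasDerivAt_id t).sub_const 1).const_mul 2).div
      ((hasDerivAt_id t).add_const 1) (by positivity))).congr_deriv ?_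
    simp only [id]
    field_simp
    ring
  refine monotoneOn_of_hasDerivWithinAt_nonneg (convex_Ioi 0)
    (f' := fun t ↦ (t - 1) ^ 2 / (t * (t + 1) ^ 2))
    (fun t ht ↦ (hderiv t ht).continuousAt.continuousWithinAt) (fun t ht ↦ ?_) (fun t ht ↦ ?_)
  · rw [interior_Ioi] at ht ⊢
    exact (hderiv t ht).hasDerivWithinAt
  · rw [interior_Ioi] at ht
    have : 0 < t := ht
    positivity

lemma sub_one_mul_log_sub_two_mul_sub_one_div_add_one_nonneg {t : ℝ} (ht : 0 < t) :
    0 ≤ (t - 1) * (log t - 2 * (t - 1) / (t + 1)) := by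
  have hmono := monotoneOn_log_sub_two_mul_sub_one_div_add_one
  have h1 : (1 : ℝ) ∈ Ioi 0 := mem_Ioi.2 one_pos
  rcases le_total 1 t with h | h
  · have := hmono h1 ht h
    norm_num at this
    exact mul_nonneg (sub_nonneg.2 h) (by linarith)
  · have := hmono ht h1 h
    norm_num at this
    exact mul_nonneg_of_nonpos_of_nonpos (sub_nonpos.2 h) (by linarith)

lemma three_mul_sq_sub_one_div_le_klFun {t : ℝ} (ht : 0 ≤ t) :
    3 * (t - 1) ^ 2 / (2 * (t + 2)) ≤ klFun t := by
  obtain rfl | ht := ht.eq_or_lt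
  · norm_num [klFun_zero]
  set g : ℝ → ℝ := fun t ↦ klFun t - 3 * (t - 1) ^ 2 / (2 * (t + 2))
  set g' : ℝ → ℝ := fun t ↦ log t - 3 * (t - 1) * (t + 5) / (2 * (t + 2) ^ 2)
  have hderiv (x : ℝ) (hx : x ∈ Ioi 0) : HasDerivAt g (g' x) x := by
    have hx : 0 < x := hx
    refine ((hasDerivAt_klFun hx.ne').sub (((((hasDerivAt_id x).sub_const 1).pow 2).const_mul 3).div
      (((hasDerivAt_id x).add_const 2).const_mul 2) (by positivity))).congr_deriv ?_
    simp only [g', Nat.cast_ofNat, id, Pi.pow_apply]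
    field_simp
    ring
  have hsign (x : ℝ) (hx : x ∈ Ioi 0) : 0 ≤ (x - 1) * g' x := by
    have hx : 0 < x := hx
    have hmargin : (x - 1) * g' x = (x - 1) * (log x - 2 * (x - 1) / (x + 1)) +
        (x - 1) ^ 4 / (2 * (x + 1) * (x + 2) ^ 2) := by
      simp only [g']
      field_simp
      ring
    rw [hmargin]
    have := sub_one_mul_log_sub_two_mul_sub_one_div_add_one_nonneg hx
    positivity
  have hmin := isMinOn_of_hasDerivAt_of_sub_mul_nonneg ordConnected_Ioi
    (mem_Ioi.2 one_pos) hderiv hsign (mem_Ioi.2 ht)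
  simpa [g, klFun_one, sub_nonneg] using hmin

lemma sq_sum_le_sum_sq_div_mul_sum {ι : Type*} (s : Finset ι) {x w : ι → ℝ}
    (hw : ∀ i ∈ s, 0 ≤ w i) (hx : ∀ i ∈ s, w i = 0 → x i = 0) :
    (∑ i ∈ s, x i) ^ 2 ≤ (∑ i ∈ s, x i ^ 2 / w i) * ∑ i ∈ s, w i := by
  refine Finset.sum_sq_le_sum_mul_sum_of_sq_le_mul s
    (fun i hi ↦ div_nonneg (sq_nonneg _) (hw i hi)) hw fun i hi ↦ ?_
  obtain hwi | hwi := eq_or_ne (w i) 0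
  · simp [hx i hi hwi]
  · rw [div_mul_cancel₀ _ hwi]

lemma three_mul_sq_sub_div_le_mul_log_div_add_sub {p q : ℝ} (hp : 0 ≤ p) (hq : 0 ≤ q)
    (hpq : p = 0 → q = 0) :
    3 * (p - q) ^ 2 / (2 * (q + 2 * p)) ≤ q * log (q / p) + p - q := by
  obtain rfl | hp := hp.eq_or_lt
  · simp [hpq rfl]
  have hp0 : p ≠ 0 := hp.ne'
  calc 3 * (p - q) ^ 2 / (2 * (q + 2 * p))
      = p * (3 * (q / p - 1) ^ 2 / (2 * (q / p + 2))) := by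
        field_simp
        ring
    _ ≤ p * klFun (q / p) :=
        mul_le_mul_of_nonneg_left (three_mul_sq_sub_one_div_le_klFun (by positivity)) hp.le
    _ = q * log (q / p) + p - q := by
        rw [klFun_apply]
        field_simp

/-- Pinsker's inequality, `D(q‖p) ≥ (1/2) ‖p - q‖₁²`, for
probability distributions on a finite set with `q` absolutely continuous
with respect to `p`. -/
theorem pinsker_inequality {ι : Type*} [Fintype ι]
    (p q : ι → ℝ) (hp0 : ∀ i, 0 ≤ p i) (hq0 : ∀ i, 0 ≤ q i)
    (hp1 : ∑ i, p i = 1) (hq1 : ∑ i, q i = 1)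
    (hac : ∀ i, p i = 0 → q i = 0) :
    (1 / 2) * (∑ i, |p i - q i|) ^ 2 ≤ ∑ i, q i * Real.log (q i / p i) := by
  have hweight : ∑ i, (q i + 2 * p i) = 3 := by
    rw [Finset.sum_add_distrib, ← Finset.mul_sum, hp1, hq1]
    norm_num
  have hcs := sq_sum_le_sum_sq_div_mul_sum Finset.univ (x := fun i ↦ |p i - q i|)
    (w := fun i ↦ q i + 2 * p i) (fun i _ ↦ by linarith [hp0 i, hq0 i]) fun i _ h ↦ by
      obtain ⟨hpi, hqi⟩ : p i = 0 ∧ q i = 0 := by constructor <;> linarith [hp0 i, hq0 i]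
      simp [hpi, hqi]
  simp only [sq_abs, hweight] at hcs
  calc (1 / 2) * (∑ i, |p i - q i|) ^ 2
      ≤ (1 / 2) * ((∑ i, (p i - q i) ^ 2 / (q i + 2 * p i)) * 3) := by gcongr
    _ = ∑ i, 3 * (p i - q i) ^ 2 / (2 * (q i + 2 * p i)) := by
        rw [Finset.sum_mul, Finset.mul_sum]
        exact Finset.sum_congr rfl fun i _ ↦ by rw [mul_div_mul_comm]; ring
    _ ≤ ∑ i, (q i * log (q i / p i) + p i - q i) := Finset.sum_le_sum fun i _ ↦
        three_mul_sq_sub_div_le_mul_log_div_add_sub (hp0 i) (hq0 i) (hac i)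
    _ = ∑ i, q i * Real.log (q i / p i) := by
        rw [Finset.sum_sub_distrib, Finset.sum_add_distrib, hp1, hq1, add_sub_cancel_right]
end

section
/- For an i.i.d. source p on a d-letter alphabet, the probability of the δ-typical set satisfies p^{⊗n}(T_{p,δ}^n) ≥ 1 − (n+1)^d * exp(−nδ²/2), where T_{p,δ}^n is the union of all type classes T_t with ‖t̄ − p‖_1 ≤ δ. -/
/-!
Group the strings by type. Under the empirical distribution `q = τ/n` of a type `τ` the type
class `T_τ` has probability `#T_τ ∏ q_a^{τ_a} ≤ 1`, so under `p` it has probability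
`#T_τ ∏ p_a^{τ_a} = #T_τ ∏ q_a^{τ_a} · exp(-n D(q‖p)) ≤ exp(-n D(q‖p))`. For an atypical type
Pinsker's inequality `‖q - p‖₁² ≤ 2 D(q‖p)` turns this into `exp(-n δ²/2)`, and there are at most
`(n+1)^d` types.

Pinsker's inequality follows from Sedrakyan's form of Cauchy–Schwarz and the pointwise bound
`3 (r - 1)² ≤ 2 (r + 2) (r log r - r + 1)`, whose difference is convex (its second derivative is
`4 (log r + 1/r - 1) ≥ 0`) with a double zero at `r = 1`.
-/

open Finset Real InformationTheory

lemma three_mul_sq_le_klFun {r : ℝ} (hr : 0 ≤ r) :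
    3 * (r - 1) ^ 2 ≤ 2 * (r + 2) * klFun r := by
  set h : ℝ → ℝ := fun r => 2 * (r + 2) * klFun r - 3 * (r - 1) ^ 2
  set h' : ℝ → ℝ := fun r => 2 * klFun r + 2 * (r + 2) * log r - 6 * (r - 1)
  have hderiv : ∀ r, 0 < r → HasDerivAt h (h' r) r := fun r hr =>
    (((((hasDerivAt_id r).add_const 2).const_mul 2).mul (hasDerivAt_klFun hr.ne')).sub
      ((((hasDerivAt_id r).sub_const 1).pow 2).const_mul 3)).congr_deriv (by simp [h']; ring)
  have hderiv2 : ∀ r, 0 < r → HasDerivAt h' (4 * (log r + r⁻¹ - 1)) r := fun r hr =>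
    ((((hasDerivAt_klFun hr.ne').const_mul 2).add
      ((((hasDerivAt_id r).add_const 2).const_mul 2).mul (hasDerivAt_log hr.ne'))).sub
      (((hasDerivAt_id r).sub_const 1).const_mul 6)).congr_deriv (by field_simp; simp; ring)
  have hconv : ConvexOn ℝ (Set.Ici 0) h := by
    refine convexOn_of_hasDerivWithinAt2_nonneg (convex_Ici 0) (by fun_prop [continuous_klFun])
      (f' := h') (f'' := fun r => 4 * (log r + r⁻¹ - 1)) ?_ ?_ fun r hr => ?_ <;>
      simp only [interior_Ici, Set.mem_Ioi] at *
    · exact fun r hr => (hderiv r hr).hasDerivWithinAt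
    · exact fun r hr => (hderiv2 r hr).hasDerivWithinAt
    · linarith [one_sub_inv_le_log_of_pos hr]
  have hmin : IsMinOn h (Set.Ici 0) 1 := by
    refine hconv.isMinOn_of_rightDeriv_eq_zero (by simp) ?_
    rw [(hderiv 1 one_pos).hasDerivWithinAt.derivWithin (uniqueDiffWithinAt_Ioi 1)]
    simp [h', klFun_one]
  simpa [h, klFun_one] using hmin hr

lemma sq_sub_div_le_mul_log_div_sub_add {x y : ℝ} (hx : 0 ≤ x) (hy : 0 < y) :
    (x - y) ^ 2 / (2 / 3 * (x + 2 * y)) ≤ x * log (x / y) - x + y := by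
  have key := three_mul_sq_le_klFun (div_nonneg hx hy.le)
  rw [klFun_apply] at key
  rw [div_le_iff₀ (by positivity)]
  have : y * (3 * (x / y - 1) ^ 2) ≤ y * (2 * (x / y + 2) * (x / y * log (x / y) + 1 - x / y)) :=
    mul_le_mul_of_nonneg_left key hy.le
  field_simp at this
  linarith

theorem sum_abs_sub_sq_le_two_mul_sum_mul_log_div {ι : Type*} [Fintype ι] {q p : ι → ℝ}
    (hq : ∀ i, 0 ≤ q i) (hp : ∀ i, 0 < p i) (hq1 : ∑ i, q i = 1) (hp1 : ∑ i, p i = 1) :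
    (∑ i, |q i - p i|) ^ 2 ≤ 2 * ∑ i, q i * log (q i / p i) := by
  have hw : ∀ i ∈ univ, 0 < 2 / 3 * (q i + 2 * p i) := fun i _ => by
    have := hq i; have := hp i; positivity
  have hw1 : ∑ i, 2 / 3 * (q i + 2 * p i) = 2 := by
    rw [← mul_sum, sum_add_distrib, ← mul_sum, hq1, hp1]; norm_num
  have hkl : ∑ i, (q i * log (q i / p i) - q i + p i) = ∑ i, q i * log (q i / p i) := by
    rw [sum_add_distrib, sum_sub_distrib, hq1, hp1, sub_add_cancel]
  calc (∑ i, |q i - p i|) ^ 2 = 2 * ((∑ i, |q i - p i|) ^ 2 / ∑ i, 2 / 3 * (q i + 2 * p i)) := by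
        rw [hw1]; ring
    _ ≤ 2 * ∑ i, |q i - p i| ^ 2 / (2 / 3 * (q i + 2 * p i)) := by
        gcongr; exact sq_sum_div_le_sum_sq_div _ _ hw
    _ ≤ 2 * ∑ i, q i * log (q i / p i) := by
        rw [← hkl]; gcongr with i
        rw [sq_abs]; exact sq_sub_div_le_mul_log_div_sub_add (hq i) (hp i)

lemma sum_natCast_div_eq_one {ι : Type*} [Fintype ι] {n : ℕ} (hn : 0 < n) {τ : ι → ℕ}
    (hτ : ∑ i, τ i = n) : ∑ i, (τ i : ℝ) / n = 1 := by
  rw [← sum_div, ← Nat.cast_sum, hτ, div_self (by positivity)]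

lemma pow_eq_pow_mul_exp_neg_mul_log {n k : ℕ} (hn : 0 < n) {p : ℝ} (hp : 0 < p) :
    p ^ k = ((k : ℝ) / n) ^ k * exp (-n * ((k / n) * log ((k / n) / p))) := by
  rcases k.eq_zero_or_pos with rfl | hk
  · simp
  have hq : 0 < (k : ℝ) / n := by positivity
  calc p ^ k = ((k : ℝ) / n) ^ k * exp (log (p / (k / n))) ^ k := by
        rw [exp_log (div_pos hp hq), ← mul_pow, mul_div_cancel₀ _ hq.ne']
    _ = _ := by
        rw [← exp_nat_mul, ← inv_div _ p, log_inv]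
        field_simp

variable {α : Type*} [DecidableEq α] {n : ℕ}

def letterCount (x : Fin n → α) (a : α) : ℕ := #{j | x j = a}

lemma letterCount_le (x : Fin n → α) (a : α) : letterCount x a ≤ n :=
  (card_filter_le _ _).trans_eq (card_fin n)

variable [Fintype α]

def typeClass (n : ℕ) (τ : α → ℕ) : Finset (Fin n → α) := {x | letterCount x = τ}

lemma sum_letterCount (x : Fin n → α) : ∑ a, letterCount x a = n := by
  simp [letterCount, ← card_eq_sum_card_fiberwise fun j _ => mem_univ (x j)]

lemma card_image_letterCount_le :
    #(univ.image (letterCount (n := n) (α := α))) ≤ (n + 1) ^ Fintype.card α := by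
  calc #(univ.image letterCount)
      ≤ #(Fintype.piFinset fun _ : α => range (n + 1)) := by
        refine card_le_card fun τ hτ => ?_
        obtain ⟨x, -, rfl⟩ := mem_image.1 hτ
        simpa [Nat.lt_succ_iff] using letterCount_le x
    _ = (n + 1) ^ Fintype.card α := by simp

lemma prod_comp_eq_prod_pow_letterCount {M : Type*} [CommMonoid M] (p : α → M) (x : Fin n → α) :
    ∏ j, p (x j) = ∏ a, p a ^ letterCount x a := by
  simp [← prod_fiberwise' univ x p, letterCount]

lemma sum_typeClass_prod {R : Type*} [CommSemiring R] (p : α → R) (τ : α → ℕ) :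
    ∑ x ∈ typeClass n τ, ∏ j, p (x j) = #(typeClass n τ) * ∏ a, p a ^ τ a := by
  rw [← nsmul_eq_mul, ← sum_const]
  refine sum_congr rfl fun x hx => ?_
  rw [prod_comp_eq_prod_pow_letterCount, (mem_filter.1 hx).2]

lemma card_typeClass_mul_prod_pow_le_one {q : α → ℝ} (hq : ∀ a, 0 ≤ q a) (hq1 : ∑ a, q a = 1)
    (τ : α → ℕ) : #(typeClass n τ) * ∏ a, q a ^ τ a ≤ 1 := by
  calc #(typeClass n τ) * ∏ a, q a ^ τ a = ∑ x ∈ typeClass n τ, ∏ j, q (x j) :=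
        (sum_typeClass_prod q τ).symm
    _ ≤ ∑ x : Fin n → α, ∏ j, q (x j) :=
        sum_le_sum_of_subset_of_nonneg (subset_univ _) fun x _ _ => prod_nonneg fun j _ => hq _
    _ = 1 := by rw [← Fintype.sum_pow, hq1, one_pow]

lemma sum_typeClass_prod_le_exp_neg_mul_kl (hn : 0 < n) {p : α → ℝ} (hp : ∀ a, 0 < p a)
    {τ : α → ℕ} (hτ : ∑ a, τ a = n) :
    ∑ x ∈ typeClass n τ, ∏ j, p (x j) ≤
      exp (-n * ∑ a, ((τ a : ℝ) / n) * log ((τ a / n) / p a)) := by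
  calc ∑ x ∈ typeClass n τ, ∏ j, p (x j)
      = #(typeClass n τ) * (∏ a, ((τ a : ℝ) / n) ^ τ a) *
          exp (-n * ∑ a, ((τ a : ℝ) / n) * log ((τ a / n) / p a)) := by
        rw [sum_typeClass_prod, prod_congr rfl fun a _ => pow_eq_pow_mul_exp_neg_mul_log hn (hp a),
          prod_mul_distrib, ← exp_sum, ← mul_sum, mul_assoc]
    _ ≤ 1 * exp (-n * ∑ a, ((τ a : ℝ) / n) * log ((τ a / n) / p a)) := by
        refine mul_le_mul_of_nonneg_right ?_ (exp_pos _).le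
        exact card_typeClass_mul_prod_pow_le_one (fun a => by positivity)
          (sum_natCast_div_eq_one hn hτ) τ
    _ = _ := one_mul _

lemma sum_typeClass_prod_le_exp_of_le_sum_abs_sub (hn : 0 < n) {δ : ℝ} (hδ : 0 ≤ δ)
    {p : α → ℝ} (hp : ∀ a, 0 < p a) (hp1 : ∑ a, p a = 1) {τ : α → ℕ} (hτ : ∑ a, τ a = n)
    (hfar : δ ≤ ∑ a, |(τ a : ℝ) / n - p a|) :
    ∑ x ∈ typeClass n τ, ∏ j, p (x j) ≤ exp (-n * δ ^ 2 / 2) := by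
  have hpinsker := sum_abs_sub_sq_le_two_mul_sum_mul_log_div (fun a => by positivity) hp
    (sum_natCast_div_eq_one hn hτ) hp1
  refine (sum_typeClass_prod_le_exp_neg_mul_kl hn hp hτ).trans (exp_le_exp.2 ?_)
  have hkl : δ ^ 2 / 2 ≤ ∑ a, ((τ a : ℝ) / n) * log ((τ a / n) / p a) := by
    linarith [(pow_le_pow_left₀ hδ hfar 2).trans hpinsker]
  have := mul_le_mul_of_nonneg_left hkl (n.cast_nonneg : (0 : ℝ) ≤ n)
  linarith

lemma sum_prod_le_of_forall_le_sum_abs_sub (hn : 0 < n) {δ : ℝ} (hδ : 0 ≤ δ)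
    {p : α → ℝ} (hp : ∀ a, 0 < p a) (hp1 : ∑ a, p a = 1) {s : Finset (Fin n → α)}
    (hs : ∀ x ∈ s, δ ≤ ∑ a, |(letterCount x a : ℝ) / n - p a|) :
    ∑ x ∈ s, ∏ j, p (x j) ≤ (n + 1) ^ Fintype.card α * exp (-n * δ ^ 2 / 2) := by
  calc ∑ x ∈ s, ∏ j, p (x j)
      = ∑ τ ∈ s.image letterCount, ∑ x ∈ s with letterCount x = τ, ∏ j, p (x j) :=
        (sum_fiberwise_of_maps_to (fun x hx => mem_image_of_mem _ hx) _).symm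
    _ ≤ ∑ τ ∈ s.image letterCount, exp (-n * δ ^ 2 / 2) := by
        refine sum_le_sum fun τ hτ => ?_
        obtain ⟨x, hx, rfl⟩ := mem_image.1 hτ
        refine (sum_le_sum_of_subset_of_nonneg (filter_subset_filter _ (subset_univ _))
          fun y _ _ => prod_nonneg fun j _ => (hp _).le).trans ?_
        exact sum_typeClass_prod_le_exp_of_le_sum_abs_sub hn hδ hp hp1 (sum_letterCount x)
          (hs x hx)
    _ ≤ (n + 1) ^ Fintype.card α * exp (-n * δ ^ 2 / 2) := by
        rw [sum_const, nsmul_eq_mul]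
        gcongr
        exact_mod_cast (card_le_card (image_subset_image (subset_univ s))).trans
          card_image_letterCount_le

theorem typical_set_prob_general (d n : ℕ) (hn : 0 < n)
    (δ : ℝ) (hδ : 0 < δ)
    (p : Fin d → ℝ) (hp : ∀ i, 0 < p i) (hp1 : ∑ i, p i = 1) :
    let T : Finset (Fin n → Fin d) :=
      Finset.univ.filter fun x =>
        ∑ i, |((Finset.univ.filter fun j => x j = i).card : ℝ) / n - p i| ≤ δ
    1 - (n + 1 : ℝ) ^ d * Real.exp (-(n : ℝ) * δ ^ 2 / 2) ≤ ∑ x ∈ T, ∏ j, p (x j) := by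
  intro T
  have htotal : ∑ x : Fin n → Fin d, ∏ j, p (x j) = 1 := by
    rw [← Fintype.sum_pow, hp1, one_pow]
  have hfar := sum_prod_le_of_forall_le_sum_abs_sub hn hδ.le hp hp1
    (s := univ.filter fun x => ¬ ∑ i, |(#{j | x j = i} : ℝ) / n - p i| ≤ δ)
    fun x hx => (not_le.1 (mem_filter.1 hx).2).le
  rw [Fintype.card_fin] at hfar
  rw [← sum_filter_add_sum_filter_not univ (fun x => ∑ i, |(#{j | x j = i} : ℝ) / n - p i| ≤ δ)]
    at htotal
  linarith

open Finset in
/-- the δ-typical set has probability at least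
`1 - (n+1)^d exp(-n δ²/2)` under the i.i.d. source `p^{⊗n}`. -/
theorem typical_set_prob (d n : ℕ) (hd : 0 < d) (hn : 0 < n)
    (δ : ℝ) (hδ : 0 < δ)
    (p : Fin d → ℝ) (hp : ∀ i, 0 < p i) (hp1 : ∑ i, p i = 1) :
    let T : Finset (Fin n → Fin d) :=
      Finset.univ.filter fun x =>
        ∑ i, |((Finset.univ.filter fun j => x j = i).card : ℝ) / n - p i| ≤ δ
    1 - (n + 1 : ℝ) ^ d * Real.exp (-(n : ℝ) * δ ^ 2 / 2) ≤ ∑ x ∈ T, ∏ j, p (x j) :=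
  typical_set_prob_general d n hn δ hδ p hp hp1
end

section
/- Fannes' continuity inequality for Shannon entropy: if p and q are probability distributions on d letters with ε = ‖p−q‖_1, then |H(p) − H(q)| ≤ ε·log d + η̄(ε), where η̄(x) = −x log x for x ≤ 1/e and η̄(x) = 1/e for x > 1/e. -/
open Real Finset

/-- Global maximum of `negMulLog` on `[0, ∞)` is `e⁻¹ = exp (-1)`. -/
lemma aux_negMulLog_le_exp_neg_one {x : ℝ} (hx : 0 ≤ x) :
    Real.negMulLog x ≤ Real.exp (-1) := by
  rcases hx.eq_or_lt with rfl | hx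
  · simp [Real.exp_pos (-1) |>.le]
  · have h := Real.one_sub_inv_le_log_of_pos (mul_pos hx (Real.exp_pos 1))
    rw [Real.log_mul hx.ne' (Real.exp_ne_zero 1), Real.log_exp] at h
    have hinv : (x * Real.exp 1)⁻¹ = x⁻¹ * Real.exp (-1) := by
      rw [mul_inv, Real.exp_neg]
    rw [hinv] at h
    have hx' : x⁻¹ * x = 1 := inv_mul_cancel₀ hx.ne'
    have := mul_le_mul_of_nonneg_left h hx.le
    simp only [Real.negMulLog]
    nlinarith [Real.exp_pos (-1)]

lemma aux_negMulLog_exp_neg_one : Real.negMulLog (Real.exp (-1)) = Real.exp (-1) := by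
  simp [Real.negMulLog, Real.log_exp]

/-- `t ≤ η t` for `0 ≤ t ≤ e⁻¹`. -/
lemma aux_self_le_negMulLog {t : ℝ} (h0 : 0 ≤ t) (h1 : t ≤ Real.exp (-1)) :
    t ≤ Real.negMulLog t := by
  rcases h0.eq_or_lt with rfl | h0
  · simp
  · have hlog : Real.log t ≤ -1 := by
      have := Real.log_le_log h0 h1
      rwa [Real.log_exp] at this
    simp only [Real.negMulLog]
    nlinarith

/-- `η` is monotone on `[0, e⁻¹]`. -/
lemma aux_negMulLog_mono {a b : ℝ} (ha : 0 ≤ a) (hab : a ≤ b) (hb : b ≤ Real.exp (-1)) :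
    Real.negMulLog a ≤ Real.negMulLog b := by
  rcases ha.eq_or_lt with rfl | ha
  · simp only [Real.negMulLog_zero]
    exact Real.negMulLog_nonneg (le_trans (by norm_num) hab)
      (hb.trans (by rw [← Real.exp_zero]; exact Real.exp_le_exp.2 (by norm_num)))
  · have hb0 : 0 < b := lt_of_lt_of_le ha hab
    have h1 : Real.log b - Real.log a ≤ b / a - 1 := by
      have := Real.log_le_sub_one_of_pos (div_pos hb0 ha)
      rwa [Real.log_div hb0.ne' ha.ne'] at this
    have h1' : a * (Real.log b - Real.log a) ≤ b - a := by
      have := mul_le_mul_of_nonneg_left h1 ha.le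
      have hba : a * (b / a - 1) = b - a := by field_simp
      linarith [hba ▸ this]
    have h2 : Real.log b ≤ -1 := by
      have := Real.log_le_log hb0 hb
      rwa [Real.log_exp] at this
    have h3 : (b - a) * Real.log b ≤ (b - a) * (-1) :=
      mul_le_mul_of_nonneg_left h2 (by linarith)
    simp only [Real.negMulLog]
    nlinarith

/-- Subadditivity-type bound: `η b - η a ≤ η (b - a)` for `0 ≤ a ≤ b`. -/
lemma aux_negMulLog_sub_le {a b : ℝ} (ha : 0 ≤ a) (hab : a ≤ b) :
    Real.negMulLog b - Real.negMulLog a ≤ Real.negMulLog (b - a) := by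
  set t := b - a with ht
  have ht0 : 0 ≤ t := by linarith
  have hb0 : 0 ≤ b := le_trans ha hab
  have h1 : a * Real.log a ≤ a * Real.log b := by
    rcases ha.eq_or_lt with rfl | ha'
    · simp
    · exact mul_le_mul_of_nonneg_left (Real.log_le_log ha' hab) ha
  have h2 : t * Real.log t ≤ t * Real.log b := by
    rcases ht0.eq_or_lt with h | ht'
    · simp [← h]
    · exact mul_le_mul_of_nonneg_left (Real.log_le_log ht' (by linarith)) ht0
  have hb : b * Real.log b = a * Real.log b + t * Real.log b := by rw [ht]; ring
  simp only [Real.negMulLog]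
  nlinarith

/-- Lipschitz-type bound in the other direction: `η a - η b ≤ b - a` for `0 ≤ a ≤ b ≤ 1`. -/
lemma aux_negMulLog_sub_le' {a b : ℝ} (ha : 0 ≤ a) (hab : a ≤ b) (hb : b ≤ 1) :
    Real.negMulLog a - Real.negMulLog b ≤ b - a := by
  rcases ha.eq_or_lt with rfl | ha'
  · simp only [Real.negMulLog_zero, zero_sub, sub_zero, neg_le]
    have := Real.negMulLog_nonneg (by linarith : (0:ℝ) ≤ b) hb
    linarith
  · have hb0 : 0 < b := lt_of_lt_of_le ha' hab
    have h1 : Real.log b - Real.log a ≤ b / a - 1 := by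
      have := Real.log_le_sub_one_of_pos (div_pos hb0 ha')
      rwa [Real.log_div hb0.ne' ha'.ne'] at this
    have h1' : a * (Real.log b - Real.log a) ≤ b - a := by
      have := mul_le_mul_of_nonneg_left h1 ha'.le
      have hba : a * (b / a - 1) = b - a := by field_simp
      linarith [hba ▸ this]
    have h2 : Real.log b ≤ 0 := Real.log_nonpos hb0.le hb
    have h3 : (b - a) * Real.log b ≤ 0 :=
      mul_nonpos_of_nonneg_of_nonpos (by linarith) h2
    simp only [Real.negMulLog]
    nlinarith

/-- `η x ≤ η̄ x` for `x ≥ 0`. -/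
lemma aux_le_etaBar {x : ℝ} (hx : 0 ≤ x) :
    Real.negMulLog x ≤ Real.negMulLog (min x (Real.exp (-1))) := by
  rcases le_total x (Real.exp (-1)) with h | h
  · rw [min_eq_left h]
  · rw [min_eq_right h, aux_negMulLog_exp_neg_one]
    exact aux_negMulLog_le_exp_neg_one hx

/-- Pointwise Fannes-type bound for ordered arguments. -/
lemma aux_pointwise_le {a b : ℝ} (ha : 0 ≤ a) (hab : a ≤ b) (hb : b ≤ 1) :
    |Real.negMulLog a - Real.negMulLog b| ≤
      Real.negMulLog (min (b - a) (Real.exp (-1))) := by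
  have ht0 : 0 ≤ b - a := by linarith
  rw [abs_sub_le_iff]
  constructor
  · -- η a - η b ≤ η̄ (b - a)
    have hstep := aux_negMulLog_sub_le' ha hab hb
    rcases le_total (b - a) (Real.exp (-1)) with h | h
    · rw [min_eq_left h]
      exact hstep.trans (aux_self_le_negMulLog ht0 h)
    · rw [min_eq_right h, aux_negMulLog_exp_neg_one]
      have h1 : Real.negMulLog a ≤ Real.exp (-1) := aux_negMulLog_le_exp_neg_one ha
      have h2 : 0 ≤ Real.negMulLog b := Real.negMulLog_nonneg (le_trans ha hab) hb
      linarith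
  · -- η b - η a ≤ η̄ (b - a)
    exact (aux_negMulLog_sub_le ha hab).trans (aux_le_etaBar ht0)

/-- Pointwise Fannes-type bound. -/
lemma aux_pointwise {a b : ℝ} (ha0 : 0 ≤ a) (ha1 : a ≤ 1) (hb0 : 0 ≤ b) (hb1 : b ≤ 1) :
    |Real.negMulLog a - Real.negMulLog b| ≤
      Real.negMulLog (min |a - b| (Real.exp (-1))) := by
  rcases le_total a b with h | h
  · rw [abs_of_nonpos (by linarith : a - b ≤ 0)]
    have := aux_pointwise_le ha0 h hb1
    convert this using 3
    ring
  · rw [abs_of_nonneg (by linarith : 0 ≤ a - b), ← abs_sub_comm]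
    exact aux_pointwise_le hb0 h ha1

/-- Concavity of `η̄`. -/
lemma aux_etaBar_concave :
    ConcaveOn ℝ (Set.Ici (0:ℝ)) (fun x => Real.negMulLog (min x (Real.exp (-1)))) := by
  have C0 : (0:ℝ) < Real.exp (-1) := Real.exp_pos _
  have key : ∀ a b wa wb : ℝ, 0 ≤ a → a ≤ b → 0 ≤ wa → 0 ≤ wb → wa + wb = 1 →
      wa * Real.negMulLog (min a (Real.exp (-1))) +
        wb * Real.negMulLog (min b (Real.exp (-1))) ≤
      Real.negMulLog (min (wa * a + wb * b) (Real.exp (-1))) := by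
    intro a b wa wb ha hab hwa hwb hw
    set C := Real.exp (-1) with hC
    have hb0 : 0 ≤ b := le_trans ha hab
    have hm0 : 0 ≤ wa * a + wb * b := by positivity
    have hma : a ≤ wa * a + wb * b := by nlinarith
    have hmb : wa * a + wb * b ≤ b := by nlinarith
    rcases le_total b C with hbC | hbC
    · -- all points ≤ C
      rw [min_eq_left hbC, min_eq_left (le_trans hab hbC), min_eq_left (le_trans hmb hbC)]
      have := Real.concaveOn_negMulLog.2 (Set.mem_Ici.2 ha) (Set.mem_Ici.2 hb0) hwa hwb hw
      simpa using this
    · rcases le_total C a with haC | haC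
      · -- all points ≥ C
        rw [min_eq_right haC, min_eq_right hbC, min_eq_right (le_trans haC hma)]
        have : wa * Real.negMulLog C + wb * Real.negMulLog C = Real.negMulLog C := by
          rw [← add_mul, hw, one_mul]
        linarith
      · -- a ≤ C ≤ b
        rw [min_eq_left haC, min_eq_right hbC]
        rcases le_total (wa * a + wb * b) C with hmC | hmC
        · rw [min_eq_left hmC]
          have hm' : wa * a + wb * C ≤ wa * a + wb * b := by nlinarith
          have hm'0 : 0 ≤ wa * a + wb * C := by positivity
          have hcc := Real.concaveOn_negMulLog.2 (Set.mem_Ici.2 ha)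
            (Set.mem_Ici.2 C0.le) hwa hwb hw
          have hmono := aux_negMulLog_mono hm'0 hm' hmC
          simp only [smul_eq_mul] at hcc
          linarith
        · rw [min_eq_right hmC, aux_negMulLog_exp_neg_one]
          have h1 : Real.negMulLog a ≤ C := aux_negMulLog_le_exp_neg_one ha
          have h2 : Real.negMulLog C = C := aux_negMulLog_exp_neg_one
          nlinarith
  refine ⟨convex_Ici 0, ?_⟩
  intro a ha b hb wa wb hwa hwb hw
  simp only [smul_eq_mul]
  rcases le_total a b with h | h
  · exact key a b wa wb (Set.mem_Ici.1 ha) h hwa hwb hw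
  · have := key b a wb wa (Set.mem_Ici.1 hb) h hwb hwa (by linarith)
    calc wa * Real.negMulLog (min a (Real.exp (-1))) +
          wb * Real.negMulLog (min b (Real.exp (-1)))
        = wb * Real.negMulLog (min b (Real.exp (-1))) +
          wa * Real.negMulLog (min a (Real.exp (-1))) := by ring
      _ ≤ Real.negMulLog (min (wb * b + wa * a) (Real.exp (-1))) := this
      _ = Real.negMulLog (min (wa * a + wb * b) (Real.exp (-1))) := by ring_nf

/-- Scaling inequality: `D * η̄ (ε / D) ≤ ε * log D + η̄ ε` for `D ≥ 1`, `ε ≥ 0`. -/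
lemma aux_scaling {D ε : ℝ} (hD : 1 ≤ D) (hε : 0 ≤ ε) :
    D * Real.negMulLog (min (ε / D) (Real.exp (-1))) ≤
      ε * Real.log D + Real.negMulLog (min ε (Real.exp (-1))) := by
  have C0 : (0:ℝ) < Real.exp (-1) := Real.exp_pos _
  have hD0 : (0:ℝ) < D := lt_of_lt_of_le one_pos hD
  have hlogD : 0 ≤ Real.log D := Real.log_nonneg hD
  rcases hε.eq_or_lt with rfl | hε
  · simp [min_eq_left C0.le]
  · rcases le_total (ε / D) (Real.exp (-1)) with h | h
    · rw [min_eq_left h]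
      have hεD : 0 < ε / D := div_pos hε hD0
      have hlog : Real.log (ε / D) = Real.log ε - Real.log D :=
        Real.log_div hε.ne' hD0.ne'
      have hLHS : D * Real.negMulLog (ε / D) = ε * Real.log D + Real.negMulLog ε := by
        simp only [Real.negMulLog, hlog]
        field_simp
        ring
      rw [hLHS]
      have := aux_le_etaBar hε.le
      linarith
    · rw [min_eq_right h, aux_negMulLog_exp_neg_one]
      set C := Real.exp (-1) with hC
      have hεC : D * C ≤ ε := by
        rw [le_div_iff₀ hD0] at h
        linarith
      have hCε : C ≤ ε := le_trans (by nlinarith) hεC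
      rw [min_eq_right hCε, aux_negMulLog_exp_neg_one, ← hC]
      -- need : D * C ≤ ε * log D + C, i.e. (D - 1) * C ≤ ε * log D
      have hlog2 : 1 - D⁻¹ ≤ Real.log D := Real.one_sub_inv_le_log_of_pos hD0
      have h4 : D * (1 - D⁻¹) ≤ D * Real.log D := by nlinarith
      have h5 : D * (1 - D⁻¹) = D - 1 := by field_simp
      have h6 : D * C * Real.log D ≤ ε * Real.log D :=
        mul_le_mul_of_nonneg_right hεC hlogD
      nlinarith

/-- Fannes' continuity inequality for Shannon entropy:
if `ε = ‖p - q‖₁` then `|H(p) - H(q)| ≤ ε log d + η̄(ε)`, where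
`η̄(x) = η(min(x, 1/e))` and `η(x) = -x log x`. -/
theorem fannes_inequality (d : ℕ) (hd : 0 < d)
    (p q : Fin d → ℝ) (hp0 : ∀ i, 0 ≤ p i) (hq0 : ∀ i, 0 ≤ q i)
    (hp1 : ∑ i, p i = 1) (hq1 : ∑ i, q i = 1)
    (ε : ℝ) (hε : ε = ∑ i, |p i - q i|) :
    |(∑ i, Real.negMulLog (p i)) - ∑ i, Real.negMulLog (q i)| ≤
      ε * Real.log d + Real.negMulLog (min ε (Real.exp (-1))) := by
  have hD0 : (0:ℝ) < d := by exact_mod_cast hd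
  have hD1 : (1:ℝ) ≤ d := by exact_mod_cast hd
  have hp1' : ∀ i, p i ≤ 1 := fun i => by
    calc p i ≤ ∑ j, p j := Finset.single_le_sum (fun j _ => hp0 j) (Finset.mem_univ i)
      _ = 1 := hp1
  have hq1' : ∀ i, q i ≤ 1 := fun i => by
    calc q i ≤ ∑ j, q j := Finset.single_le_sum (fun j _ => hq0 j) (Finset.mem_univ i)
      _ = 1 := hq1
  have hε0 : 0 ≤ ε := hε ▸ Finset.sum_nonneg (fun i _ => abs_nonneg _)
  -- step 1: pointwise bound and triangle inequality
  have step1 : |(∑ i, Real.negMulLog (p i)) - ∑ i, Real.negMulLog (q i)| ≤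
      ∑ i, Real.negMulLog (min |p i - q i| (Real.exp (-1))) := by
    rw [← Finset.sum_sub_distrib]
    refine (Finset.abs_sum_le_sum_abs _ _).trans ?_
    exact Finset.sum_le_sum fun i _ =>
      aux_pointwise (hp0 i) (hp1' i) (hq0 i) (hq1' i)
  -- step 2: Jensen
  have step2 : ∑ i, Real.negMulLog (min |p i - q i| (Real.exp (-1))) ≤
      (d:ℝ) * Real.negMulLog (min (ε / d) (Real.exp (-1))) := by
    have hjensen := aux_etaBar_concave.le_map_sum (t := Finset.univ)
      (w := fun _ : Fin d => (d:ℝ)⁻¹) (p := fun i => |p i - q i|)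
      (fun i _ => by positivity)
      (by simp [Finset.card_univ]; field_simp)
      (fun i _ => Set.mem_Ici.2 (abs_nonneg _))
    simp only [smul_eq_mul] at hjensen
    have hsum : ∑ i, (d:ℝ)⁻¹ * |p i - q i| = ε / d := by
      rw [← Finset.mul_sum, ← hε]
      ring
    rw [hsum] at hjensen
    have : ∑ i, (d:ℝ)⁻¹ * Real.negMulLog (min |p i - q i| (Real.exp (-1))) =
        (d:ℝ)⁻¹ * ∑ i, Real.negMulLog (min |p i - q i| (Real.exp (-1))) := by
      rw [Finset.mul_sum]
    rw [this] at hjensen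
    calc ∑ i, Real.negMulLog (min |p i - q i| (Real.exp (-1)))
        = (d:ℝ) * ((d:ℝ)⁻¹ * ∑ i, Real.negMulLog (min |p i - q i| (Real.exp (-1)))) := by
          field_simp
      _ ≤ (d:ℝ) * Real.negMulLog (min (ε / d) (Real.exp (-1))) :=
          mul_le_mul_of_nonneg_left hjensen hD0.le
  -- step 3: scaling
  have step3 := aux_scaling hD1 hε0
  linarith
end

section
/- Dimension bound for symmetric-group irreps: for a partition λ of n into at most d parts, the dimension of the S_n-irrep P_λ satisfies binom(n; λ)·(n+d)^{−d(d−1)/2} ≤ dim P_λ ≤ binom(n; λ), where binom(n; λ) = n!/(λ_1!···λ_d!). Consequently exp(n H(λ̄))·(n+d)^{−d(d+1)/2} ≤ dim P_λ ≤ exp(n H(λ̄)), with λ̄ = λ/n. -/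
/-!
Since `λ̃ᵢ! = λᵢ! · (λᵢ + 1)(λᵢ + 2)⋯(λᵢ + d - 1 - i)`, the Frobenius formula reads
`binom(n; λ) · V / A` with `V = ∏_{i<j} (λ̃ᵢ - λ̃ⱼ)` and `A` the product of these rising
factorials. Every gap `λ̃ᵢ - λ̃ⱼ` is at least `1` because `λ` is antitone, and at most
`λᵢ + (j - i)`, which is the `(j - i)`-th factor of the `i`-th rising factorial; so `1 ≤ V ≤ A`, and
`A ≤ (n + d)^{d(d-1)/2}`.

For the entropy form, `exp (n H(λ/n)) = 1 / ∏ (λᵢ/n)^λᵢ`, and `binom(n; λ) ∏ (λᵢ/n)^λᵢ` is a term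
of the multinomial expansion of `(∑ λᵢ/n)^n = 1`. It is the largest of these at most
`(n + 1)^d` terms, because `a! a^k ≤ k! a^a`.
-/

open Finset
open scoped Nat

namespace Nat

theorem factorial_mul_pow_le_factorial_mul_pow (a k : ℕ) : a ! * a ^ k ≤ k ! * a ^ a := by
  rcases le_total a k with h | h
  · obtain ⟨m, rfl⟩ := Nat.exists_eq_add_of_le h
    calc a ! * a ^ (a + m) = a ! * a ^ m * a ^ a := by ring
      _ ≤ (a + m)! * a ^ a := by
        gcongr; simpa using factorial_mul_pow_sub_le_factorial h
  · obtain ⟨m, rfl⟩ := Nat.exists_eq_add_of_le h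
    calc (k + m)! * (k + m) ^ k = k ! * (k + 1).ascFactorial m * (k + m) ^ k := by
          rw [factorial_mul_ascFactorial]
      _ ≤ k ! * (k + m) ^ m * (k + m) ^ k := by gcongr; exact ascFactorial_le_pow_add k m
      _ = k ! * (k + m) ^ (k + m) := by ring

theorem multinomial_mul_prod_pow_le {ι : Type*} (s : Finset ι) (k lam : ι → ℕ)
    (h : ∑ i ∈ s, k i = ∑ i ∈ s, lam i) :
    multinomial s k * ∏ i ∈ s, lam i ^ k i ≤ multinomial s lam * ∏ i ∈ s, lam i ^ lam i := by
  have hpos : 0 < (∏ i ∈ s, (k i)!) * ∏ i ∈ s, (lam i)! := by positivity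
  refine le_of_mul_le_mul_left ?_ hpos
  calc (∏ i ∈ s, (k i)!) * (∏ i ∈ s, (lam i)!) * (multinomial s k * ∏ i ∈ s, lam i ^ k i)
      = ((∏ i ∈ s, (k i)!) * multinomial s k) * ∏ i ∈ s, ((lam i)! * lam i ^ k i) := by
        rw [prod_mul_distrib]; ring
    _ ≤ ((∏ i ∈ s, (lam i)!) * multinomial s lam) * ∏ i ∈ s, ((k i)! * lam i ^ lam i) := by
        rw [multinomial_spec, multinomial_spec, h]
        exact mul_le_mul_left _
          (prod_le_prod' fun i _ ↦ factorial_mul_pow_le_factorial_mul_pow _ _)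
    _ = (∏ i ∈ s, (k i)!) * (∏ i ∈ s, (lam i)!) *
          (multinomial s lam * ∏ i ∈ s, lam i ^ lam i) := by
        rw [prod_mul_distrib]; ring

end Nat

theorem Finset.card_piAntidiag_univ_le {ι : Type*} [Fintype ι] [DecidableEq ι] (n : ℕ) :
    #(piAntidiag (univ : Finset ι) n) ≤ (n + 1) ^ Fintype.card ι := by
  calc #(piAntidiag (univ : Finset ι) n)
      ≤ #(Fintype.piFinset fun _ : ι ↦ range (n + 1)) := by
        refine card_le_card fun k hk ↦ Fintype.mem_piFinset.2 fun i ↦ ?_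
        rw [mem_piAntidiag] at hk
        exact mem_range_succ_iff.2 (hk.1 ▸ single_le_sum (fun _ _ ↦ Nat.zero_le _) (mem_univ i))
    _ = (n + 1) ^ Fintype.card ι := by simp

theorem Fin.prod_Ioi_eq_prod_range {M : Type*} [CommMonoid M] {d : ℕ} (f : ℕ → M) (i : Fin d) :
    ∏ j ∈ Ioi i, f j = ∏ k ∈ range (d - 1 - i), f (i + 1 + k) := by
  have h := prod_map (Ioi i) Fin.valEmbedding f
  rw [Fin.map_valEmbedding_Ioi, ← Finset.Ico_add_one_left_eq_Ioo, prod_Ico_eq_prod_range,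
    Nat.sub_add_eq, Nat.sub_right_comm] at h
  exact h.symm

section FrobeniusFormula

variable {d : ℕ}

def shiftedParts (lam : Fin d → ℕ) (i : Fin d) : ℕ := lam i + (d - 1 - i)

noncomputable def frobeniusDim (n : ℕ) (lam : Fin d → ℕ) : ℝ :=
  ((n ! : ℝ) / ∏ i, ((shiftedParts lam i)! : ℝ)) *
    ∏ i, ∏ j ∈ univ.filter (fun j : Fin d => i < j),
      ((shiftedParts lam i : ℝ) - (shiftedParts lam j : ℝ))

variable (lam : Fin d → ℕ) {n : ℕ}

theorem shiftedParts_strictAnti (hlam : Antitone lam) : StrictAnti (shiftedParts lam) := by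
  intro i j hij
  have := hlam hij.le
  have : (i : ℕ) < j := hij
  have := j.isLt
  unfold shiftedParts
  omega

theorem factorial_shiftedParts (i : Fin d) :
    (shiftedParts lam i)! = (lam i)! * (lam i + 1).ascFactorial (d - 1 - i) :=
  (Nat.factorial_mul_ascFactorial _ _).symm

theorem prod_Ioi_shiftedParts_sub_le (i : Fin d) :
    ∏ j ∈ Ioi i, (shiftedParts lam i - shiftedParts lam j) ≤
      (lam i + 1).ascFactorial (d - 1 - i) := by
  calc ∏ j ∈ Ioi i, (shiftedParts lam i - shiftedParts lam j)
      ≤ ∏ j ∈ Ioi i, (lam i + ((j : ℕ) - i)) := prod_le_prod' fun j hj ↦ by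
        have hij : i < j := mem_Ioi.1 hj
        have : (i : ℕ) < j := hij
        have := j.isLt
        unfold shiftedParts
        omega
    _ = (lam i + 1).ascFactorial (d - 1 - i) := by
      rw [Fin.prod_Ioi_eq_prod_range (fun m ↦ lam i + (m - i)), Nat.ascFactorial_eq_prod_range]
      exact prod_congr rfl fun k _ ↦ by omega

theorem prod_prod_Ioi_shiftedParts_sub_pos (hlam : Antitone lam) :
    0 < ∏ i, ∏ j ∈ Ioi i, (shiftedParts lam i - shiftedParts lam j) :=
  prod_pos fun _ _ ↦ prod_pos fun _ hj ↦
    Nat.sub_pos_of_lt (shiftedParts_strictAnti lam hlam (mem_Ioi.1 hj))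

theorem prod_ascFactorial_le (hsum : ∑ i, lam i = n) :
    ∏ i, (lam i + 1).ascFactorial (d - 1 - i) ≤ (n + d) ^ (d * (d - 1) / 2) := by
  have hexp : ∑ i : Fin d, (d - 1 - i) = d * (d - 1) / 2 := by
    rw [Fin.sum_univ_eq_sum_range (fun k ↦ d - 1 - k), sum_range_reflect (fun k ↦ k),
      sum_range_id]
  calc ∏ i, (lam i + 1).ascFactorial (d - 1 - i)
      ≤ ∏ i : Fin d, (n + d) ^ (d - 1 - i) := prod_le_prod' fun i _ ↦ by
        have : lam i ≤ n := hsum ▸ single_le_sum (fun _ _ ↦ Nat.zero_le _) (mem_univ i)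
        exact (Nat.ascFactorial_le_pow_add _ _).trans (Nat.pow_le_pow_left (by omega) _)
    _ = (n + d) ^ (d * (d - 1) / 2) := by rw [prod_pow_eq_pow_sum, hexp]

theorem frobeniusDim_eq (hlam : Antitone lam) (hsum : ∑ i, lam i = n) :
    frobeniusDim n lam = Nat.multinomial univ lam *
      ((∏ i, ∏ j ∈ Ioi i, (shiftedParts lam i - shiftedParts lam j) : ℕ) : ℝ) /
        ∏ i, ((lam i + 1).ascFactorial (d - 1 - i) : ℝ) := by
  have hgap : ∀ i, ∀ j ∈ Ioi i, ((shiftedParts lam i - shiftedParts lam j : ℕ) : ℝ) =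
      shiftedParts lam i - shiftedParts lam j := fun i j hj ↦
    Nat.cast_sub (shiftedParts_strictAnti lam hlam (mem_Ioi.1 hj)).le
  have hfac : (n ! : ℝ) = (∏ i, ((lam i)! : ℝ)) * Nat.multinomial univ lam := by
    rw [← hsum, ← Nat.multinomial_spec]; push_cast; rfl
  simp only [frobeniusDim, factorial_shiftedParts, filter_lt_eq_Ioi, hfac]
  push_cast [prod_mul_distrib]
  rw [prod_congr rfl fun i _ ↦ prod_congr rfl (hgap i)]
  have : ∀ i, ((lam i)! : ℝ) ≠ 0 := fun i ↦ by positivity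
  field_simp

theorem frobeniusDim_le_multinomial (hlam : Antitone lam) (hsum : ∑ i, lam i = n) :
    frobeniusDim n lam ≤ Nat.multinomial univ lam := by
  rw [frobeniusDim_eq lam hlam hsum, mul_div_assoc, ← Nat.cast_prod]
  refine mul_le_of_le_one_right (Nat.cast_nonneg _) (div_le_one_of_le₀ ?_ (Nat.cast_nonneg _))
  exact_mod_cast prod_le_prod' fun i _ ↦ prod_Ioi_shiftedParts_sub_le lam i

theorem multinomial_mul_inv_le_frobeniusDim (hlam : Antitone lam)
    (hsum : ∑ i, lam i = n) :
    Nat.multinomial univ lam * ((n + d : ℝ) ^ (d * (d - 1) / 2))⁻¹ ≤ frobeniusDim n lam := by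
  rw [frobeniusDim_eq lam hlam hsum, mul_div_assoc, ← Nat.cast_prod]
  gcongr
  have hA : (0 : ℝ) < ∏ i, (lam i + 1).ascFactorial (d - 1 - i) := by positivity
  calc ((n + d : ℝ) ^ (d * (d - 1) / 2))⁻¹
      ≤ 1 / ((∏ i, (lam i + 1).ascFactorial (d - 1 - i) : ℕ) : ℝ) := by
        rw [one_div]
        exact inv_anti₀ hA (by exact_mod_cast prod_ascFactorial_le lam hsum)
    _ ≤ _ := by
        gcongr
        exact_mod_cast prod_prod_Ioi_shiftedParts_sub_pos lam hlam

end FrobeniusFormula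

theorem Real.exp_mul_negMulLog_div {a n : ℕ} (h : a ≤ n) :
    Real.exp (n * Real.negMulLog (a / n)) = (((a : ℝ) / n) ^ a)⁻¹ := by
  rcases a.eq_zero_or_pos with rfl | ha
  · simp
  have hn : (0 : ℝ) < n := by exact_mod_cast ha.trans_le h
  have hx : 0 < (a : ℝ) / n := by positivity
  rw [Real.negMulLog, show (n : ℝ) * (-(a / n) * Real.log (a / n)) = -(a * Real.log (a / n)) by
    field_simp, Real.exp_neg, Real.exp_nat_mul, Real.exp_log hx]

section Entropy

variable {ι : Type*} [Fintype ι]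

noncomputable def empiricalEntropy (n : ℕ) (k : ι → ℕ) : ℝ :=
  ∑ i, Real.negMulLog ((k i : ℝ) / n)

variable (k : ι → ℕ) {n : ℕ}

theorem exp_mul_empiricalEntropy (hsum : ∑ i, k i = n) :
    Real.exp (n * empiricalEntropy n k) = (∏ i, ((k i : ℝ) / n) ^ k i)⁻¹ := by
  rw [empiricalEntropy, mul_sum, Real.exp_sum, ← prod_inv_distrib]
  exact prod_congr rfl fun i _ ↦
    Real.exp_mul_negMulLog_div (hsum ▸ single_le_sum (fun _ _ ↦ Nat.zero_le _) (mem_univ i))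

theorem sum_multinomial_mul_prod_div_pow_eq_one [DecidableEq ι] (hsum : ∑ i, k i = n) :
    ∑ m ∈ piAntidiag univ n, (Nat.multinomial univ m : ℝ) * ∏ i, ((k i : ℝ) / n) ^ m i = 1 := by
  rw [← sum_pow_eq_sum_piAntidiag]
  rcases n.eq_zero_or_pos with rfl | hn
  · simp
  rw [← sum_div, ← Nat.cast_sum, hsum, div_self (by positivity), one_pow]

theorem multinomial_mul_prod_div_pow_le_one (hsum : ∑ i, k i = n) :
    (Nat.multinomial univ k : ℝ) * ∏ i, ((k i : ℝ) / n) ^ k i ≤ 1 := by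
  classical
  rw [← sum_multinomial_mul_prod_div_pow_eq_one k hsum]
  exact single_le_sum (f := fun m ↦ (Nat.multinomial univ m : ℝ) * ∏ i, ((k i : ℝ) / n) ^ m i)
    (fun _ _ ↦ by positivity) (mem_piAntidiag.2 ⟨hsum, fun i _ ↦ mem_univ i⟩)

theorem one_le_pow_card_mul_multinomial_mul_prod_div_pow (hsum : ∑ i, k i = n) :
    1 ≤ ((n : ℝ) + 1) ^ Fintype.card ι * Nat.multinomial univ k * ∏ i, ((k i : ℝ) / n) ^ k i := by
  classical
  have hdiv : ∀ m : ι → ℕ, ∑ i, m i = n →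
      ∏ i, ((k i : ℝ) / n) ^ m i = (∏ i, (k i : ℝ) ^ m i) / n ^ n := fun m hm ↦ by
    simp_rw [div_pow]
    rw [prod_div_distrib, prod_pow_eq_pow_sum, hm]
  have hterm : ∀ m ∈ piAntidiag univ n, (Nat.multinomial univ m : ℝ) * ∏ i, ((k i : ℝ) / n) ^ m i
      ≤ Nat.multinomial univ k * ∏ i, ((k i : ℝ) / n) ^ k i := fun m hm ↦ by
    have hm := (mem_piAntidiag.1 hm).1
    rw [hdiv m hm, hdiv k hsum, mul_div_assoc', mul_div_assoc']
    gcongr ?_ / _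
    exact_mod_cast Nat.multinomial_mul_prod_pow_le univ m k (hm.trans hsum.symm)
  calc (1 : ℝ)
      = ∑ m ∈ piAntidiag univ n, (Nat.multinomial univ m : ℝ) * ∏ i, ((k i : ℝ) / n) ^ m i :=
        (sum_multinomial_mul_prod_div_pow_eq_one k hsum).symm
    _ ≤ #(piAntidiag univ n) • (Nat.multinomial univ k * ∏ i, ((k i : ℝ) / n) ^ k i) :=
        sum_le_card_nsmul _ _ _ hterm
    _ ≤ _ := by
        rw [nsmul_eq_mul, mul_assoc]
        gcongr
        exact_mod_cast card_piAntidiag_univ_le n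

theorem multinomial_le_exp_mul_empiricalEntropy (hsum : ∑ i, k i = n) :
    (Nat.multinomial univ k : ℝ) ≤ Real.exp (n * empiricalEntropy n k) := by
  have hexp := exp_mul_empiricalEntropy k hsum
  have hQ : 0 < ∏ i, ((k i : ℝ) / n) ^ k i := inv_pos.1 (hexp ▸ Real.exp_pos _)
  rw [hexp, inv_eq_one_div, le_div_iff₀ hQ]
  exact multinomial_mul_prod_div_pow_le_one k hsum

theorem exp_mul_empiricalEntropy_le (hsum : ∑ i, k i = n) :
    Real.exp (n * empiricalEntropy n k) ≤
      ((n : ℝ) + 1) ^ Fintype.card ι * Nat.multinomial univ k := by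
  have hexp := exp_mul_empiricalEntropy k hsum
  have hQ : 0 < ∏ i, ((k i : ℝ) / n) ^ k i := inv_pos.1 (hexp ▸ Real.exp_pos _)
  rw [hexp, inv_le_iff_one_le_mul₀ hQ]
  exact one_le_pow_card_mul_multinomial_mul_prod_div_pow k hsum

end Entropy

open Finset in
theorem dim_Plambda_bounds_general (d n : ℕ) (hd : 0 < d)
    (lam : Fin d → ℕ) (hlam : Antitone lam) (hsum : ∑ i, lam i = n) :
    let lt : Fin d → ℕ := fun i => lam i + (d - 1 - (i : ℕ))
    let dimP : ℝ := ((n.factorial : ℝ) / ∏ i, ((lt i).factorial : ℝ)) *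
      ∏ i, ∏ j ∈ Finset.univ.filter (fun j : Fin d => i < j), ((lt i : ℝ) - (lt j : ℝ))
    let H : ℝ := ∑ i, Real.negMulLog ((lam i : ℝ) / n)
    ((Nat.multinomial Finset.univ lam : ℝ) * ((n + d : ℝ) ^ (d * (d - 1) / 2))⁻¹ ≤ dimP ∧
      dimP ≤ (Nat.multinomial Finset.univ lam : ℝ)) ∧
    (Real.exp ((n : ℝ) * H) * ((n + d : ℝ) ^ (d * (d + 1) / 2))⁻¹ ≤ dimP ∧
      dimP ≤ Real.exp ((n : ℝ) * H)) := by
  intro lt dimP H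
  have hlower := multinomial_mul_inv_le_frobeniusDim lam hlam hsum
  have hupper := frobeniusDim_le_multinomial lam hlam hsum
  have hexp : Real.exp (n * H) ≤ (n + d : ℝ) ^ d * Nat.multinomial univ lam :=
    calc Real.exp (n * H) ≤ ((n : ℝ) + 1) ^ Fintype.card (Fin d) * Nat.multinomial univ lam :=
          exp_mul_empiricalEntropy_le lam hsum
      _ ≤ (n + d : ℝ) ^ d * Nat.multinomial univ lam := by
          rw [Fintype.card_fin]
          gcongr
          exact_mod_cast hd
  have hpow : (n + d : ℝ) ^ (d * (d + 1) / 2) = (n + d : ℝ) ^ (d * (d - 1) / 2) * (n + d) ^ d := by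
    rw [← pow_add, ← Nat.triangle_succ, Nat.add_sub_cancel, mul_comm]
  refine ⟨⟨hlower, hupper⟩, ?_, hupper.trans (multinomial_le_exp_mul_empiricalEntropy lam hsum)⟩
  calc Real.exp (n * H) * ((n + d : ℝ) ^ (d * (d + 1) / 2))⁻¹
      ≤ (n + d : ℝ) ^ d * Nat.multinomial univ lam *
          ((n + d : ℝ) ^ (d * (d - 1) / 2) * (n + d) ^ d)⁻¹ := by
        rw [hpow]
        gcongr
    _ = Nat.multinomial univ lam * ((n + d : ℝ) ^ (d * (d - 1) / 2))⁻¹ := by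
        have : (n + d : ℝ) ^ d ≠ 0 := by positivity
        field_simp
    _ ≤ dimP := hlower

open Finset in
/-- dimension bounds for the symmetric-group irrep `P_λ`, taking
the explicit dimension formula
`dim P_λ = (n!/(λ̃₁!⋯λ̃_d!))·Π_{i<j}(λ̃ᵢ - λ̃ⱼ)` (with `λ̃ = λ + (d-1,…,0)`)
as the definition: `binom(n;λ)(n+d)^{-d(d-1)/2} ≤ dim P_λ ≤ binom(n;λ)` and
`exp(n H(λ̄))(n+d)^{-d(d+1)/2} ≤ dim P_λ ≤ exp(n H(λ̄))`. -/
theorem dim_Plambda_bounds (d n : ℕ) (hd : 0 < d) (hn : 0 < n)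
    (lam : Fin d → ℕ) (hlam : Antitone lam) (hsum : ∑ i, lam i = n) :
    let lt : Fin d → ℕ := fun i => lam i + (d - 1 - (i : ℕ))
    let dimP : ℝ := ((n.factorial : ℝ) / ∏ i, ((lt i).factorial : ℝ)) *
      ∏ i, ∏ j ∈ Finset.univ.filter (fun j : Fin d => i < j), ((lt i : ℝ) - (lt j : ℝ))
    let H : ℝ := ∑ i, Real.negMulLog ((lam i : ℝ) / n)
    ((Nat.multinomial Finset.univ lam : ℝ) * ((n + d : ℝ) ^ (d * (d - 1) / 2))⁻¹ ≤ dimP ∧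
      dimP ≤ (Nat.multinomial Finset.univ lam : ℝ)) ∧
    (Real.exp ((n : ℝ) * H) * ((n + d : ℝ) ^ (d * (d + 1) / 2))⁻¹ ≤ dimP ∧
      dimP ≤ Real.exp ((n : ℝ) * H)) :=
  dim_Plambda_bounds_general d n hd lam hlam hsum
end

section
/- Equivariant maps have maximally mixed marginals: with the setup of the previous statement, additionally assume W₁ and W₂ are irreducible and P ≠ 0; normalize P to an isometry. Then the state σ = P P† / dim(V) on W₁ ⊗ W₂ (the image of the maximally mixed state on V) has both reduced states Tr_{W₂} σ and Tr_{W₁} σ maximally mixed on (the supports within) W₁ and W₂ respectively — in particular, Tr_{W₂} σ commutes with ρ_{W₁}(s) for all s ∈ G and hence is proportional to the identity on the irreducible W₁. -/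
/-!
Conjugation by `ρ₁(s) ⊗ ρ₂(s)` fixes `σ`, since `P` intertwines and `ρ_V(s)` is unitary. Taking the
partial trace over `W₂`, the unitary `ρ₂(s)` cancels cyclically, so `Tr_{W₂} σ` is a Hermitian
matrix commuting with every `ρ₁(s)`. Its spectral projections then commute with `ρ₁` too, so by
irreducibility it has a single eigenvalue, which `Tr σ = 1` fixes to `1 / dim W₁`. Swapping the
tensor factors gives the other marginal.
-/

open Matrix
open scoped Kronecker

namespace Matrix

variable {m n R : Type*}

-- The partial traces `Tr_{W₂}` and `Tr_{W₁}` on `W₁ ⊗ W₂`.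
def traceRight [Fintype n] [AddCommMonoid R] (M : Matrix (m × n) (m × n) R) : Matrix m m R :=
  of fun i j => ∑ k, M (i, k) (j, k)

def traceLeft [Fintype m] [AddCommMonoid R] (M : Matrix (m × n) (m × n) R) : Matrix n n R :=
  of fun i j => ∑ k, M (k, i) (k, j)

theorem traceLeft_eq_traceRight_submatrix_swap [Fintype m] [AddCommMonoid R]
    (M : Matrix (m × n) (m × n) R) :
    traceLeft M = traceRight (M.submatrix Prod.swap Prod.swap) := rfl

theorem trace_traceRight [Fintype m] [Fintype n] [AddCommMonoid R]
    (M : Matrix (m × n) (m × n) R) : (traceRight M).trace = M.trace :=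
  (Fintype.sum_prod_type fun p => M p p).symm

theorem trace_submatrix_equiv {l : Type*} [Fintype l] [Fintype m] [AddCommMonoid R]
    (M : Matrix m m R) (e : l ≃ m) : (M.submatrix e e).trace = M.trace :=
  Fintype.sum_equiv e _ _ fun _ => rfl

theorem conjTranspose_traceRight [Fintype n] [AddCommMonoid R] [StarAddMonoid R]
    (M : Matrix (m × n) (m × n) R) : (traceRight M)ᴴ = traceRight Mᴴ := by
  ext i j
  simp [traceRight, star_sum]

theorem traceRight_kronecker_one_mul [Fintype m] [Fintype n] [DecidableEq n] [Semiring R]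
    (A : Matrix m m R) (M : Matrix (m × n) (m × n) R) :
    traceRight ((A ⊗ₖ (1 : Matrix n n R)) * M) = A * traceRight M := by
  ext i j
  simp only [traceRight, mul_apply, kroneckerMap_apply, one_apply, mul_ite, mul_one, mul_zero,
    ite_mul, zero_mul, Fintype.sum_prod_type, Finset.sum_ite_eq, Finset.mem_univ, ↓reduceIte,
    of_apply, Finset.mul_sum]
  exact Finset.sum_comm

theorem traceRight_mul_kronecker_one [Fintype m] [Fintype n] [DecidableEq n] [Semiring R]
    (M : Matrix (m × n) (m × n) R) (A : Matrix m m R) :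
    traceRight (M * (A ⊗ₖ (1 : Matrix n n R))) = traceRight M * A := by
  ext i j
  simp only [traceRight, mul_apply, kroneckerMap_apply, one_apply, mul_ite, mul_one, mul_zero,
    Fintype.sum_prod_type, Finset.sum_ite_eq', Finset.mem_univ, ↓reduceIte, of_apply,
    Finset.sum_mul]
  exact Finset.sum_comm

theorem traceRight_one_kronecker_mul [Fintype m] [Fintype n] [DecidableEq m] [CommSemiring R]
    (B : Matrix n n R) (M : Matrix (m × n) (m × n) R) :
    traceRight (((1 : Matrix m m R) ⊗ₖ B) * M) = traceRight (M * ((1 : Matrix m m R) ⊗ₖ B)) := by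
  ext i j
  simp only [traceRight, mul_apply, kroneckerMap_apply, one_apply, ite_mul, one_mul, zero_mul,
    Fintype.sum_prod_type, Finset.sum_ite_irrel, Finset.sum_const_zero, Finset.sum_ite_eq,
    Finset.mem_univ, ↓reduceIte, of_apply, mul_ite, mul_zero, Finset.sum_ite_eq']
  rw [Finset.sum_comm]
  simp_rw [mul_comm]

theorem traceRight_kronecker_mul_mul_conjTranspose [Fintype m] [Fintype n] [DecidableEq m]
    [DecidableEq n] [CommSemiring R] [StarRing R] (A : Matrix m m R) {B : Matrix n n R}
    (hB : Bᴴ * B = 1) (M : Matrix (m × n) (m × n) R) :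
    traceRight ((A ⊗ₖ B) * M * (A ⊗ₖ B)ᴴ) = A * traceRight M * Aᴴ := by
  have hsplit : A ⊗ₖ B = (A ⊗ₖ 1) * (1 ⊗ₖ B) := by rw [← mul_kronecker_mul, mul_one, one_mul]
  have hsplit' : (A ⊗ₖ B)ᴴ = (1 ⊗ₖ Bᴴ) * (Aᴴ ⊗ₖ 1) := by
    rw [conjTranspose_kronecker, ← mul_kronecker_mul, one_mul, mul_one]
  calc traceRight ((A ⊗ₖ B) * M * (A ⊗ₖ B)ᴴ)
      = traceRight ((A ⊗ₖ 1) * ((1 ⊗ₖ B) * M * (1 ⊗ₖ Bᴴ)) * (Aᴴ ⊗ₖ 1)) := by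
        rw [hsplit', hsplit]
        simp only [Matrix.mul_assoc]
    _ = A * traceRight (M * (1 ⊗ₖ Bᴴ) * (1 ⊗ₖ B)) * Aᴴ := by
        rw [traceRight_mul_kronecker_one, traceRight_kronecker_one_mul, Matrix.mul_assoc (1 ⊗ₖ B),
          traceRight_one_kronecker_mul]
    _ = A * traceRight M * Aᴴ := by
        rw [Matrix.mul_assoc M, ← mul_kronecker_mul, mul_one, hB, one_kronecker_one, mul_one]

theorem submatrix_swap_kronecker_mul_mul_conjTranspose [Fintype m] [Fintype n] [CommSemiring R]
    [StarRing R] (A : Matrix m m R) (B : Matrix n n R) (M : Matrix (m × n) (m × n) R) :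
    ((A ⊗ₖ B) * M * (A ⊗ₖ B)ᴴ).submatrix Prod.swap Prod.swap =
      (B ⊗ₖ A) * M.submatrix Prod.swap Prod.swap * (B ⊗ₖ A)ᴴ := by
  have hswap : (A ⊗ₖ B).submatrix Prod.swap Prod.swap = B ⊗ₖ A := by
    ext ⟨i, k⟩ ⟨j, l⟩
    exact mul_comm _ _
  rw [← hswap, conjTranspose_submatrix, ← Equiv.coe_prodComm, submatrix_mul_equiv,
    submatrix_mul_equiv]

theorem traceLeft_kronecker_mul_mul_conjTranspose [Fintype m] [Fintype n] [DecidableEq m]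
    [DecidableEq n] [CommSemiring R] [StarRing R] {A : Matrix m m R} (hA : Aᴴ * A = 1)
    (B : Matrix n n R) (M : Matrix (m × n) (m × n) R) :
    traceLeft ((A ⊗ₖ B) * M * (A ⊗ₖ B)ᴴ) = B * traceLeft M * Bᴴ := by
  rw [traceLeft_eq_traceRight_submatrix_swap, submatrix_swap_kronecker_mul_mul_conjTranspose,
    traceRight_kronecker_mul_mul_conjTranspose B hA, traceLeft_eq_traceRight_submatrix_swap]

theorem eq_trace_div_card_smul_one [Fintype n] [DecidableEq n] {K : Type*} [Field K] [CharZero K]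
    {A : Matrix n n K} {c : K} (h : A = c • 1) : A = (A.trace / Fintype.card n) • 1 := by
  cases isEmpty_or_nonempty n
  · exact Subsingleton.elim _ _
  rw [h, trace_smul, trace_one, smul_eq_mul, mul_div_assoc,
    div_self (Nat.cast_ne_zero.mpr Fintype.card_ne_zero), mul_one]

theorem IsHermitian.eq_trace_div_card_smul_one_of_commute {ι 𝕜 : Type*} [RCLike 𝕜] [Fintype n]
    [DecidableEq n] {ρ : ι → Matrix n n 𝕜}
    (hirr : ∀ Q : Matrix n n 𝕜, Q * Q = Q → Q.IsHermitian →
      (∀ s, Q * ρ s = ρ s * Q) → Q = 0 ∨ Q = 1)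
    {A : Matrix n n 𝕜} (hA : A.IsHermitian) (hcomm : ∀ s, A * ρ s = ρ s * A) :
    A = (A.trace / Fintype.card n) • 1 := by
  cases isEmpty_or_nonempty n
  · exact Subsingleton.elim _ _
  obtain ⟨c, hc⟩ := ContinuousFunctionalCalculus.spectrum_nonempty (R := ℝ) A hA.isSelfAdjoint
  -- `cfc f A` is the spectral projection of `A` for the eigenvalue `c`
  set f : ℝ → ℝ := fun x => if x = c then 1 else 0
  have hf : ContinuousOn f (spectrum ℝ A) := A.finite_real_spectrum.continuousOn f
  have hidem : cfc f A * cfc f A = cfc f A := by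
    rw [← cfc_mul f f A]
    exact cfc_congr fun x _ => by by_cases h : x = c <;> simp [f, h]
  rcases hirr (cfc f A) hidem (cfc_predicate f A) fun s => Commute.cfc_real (hcomm s) f
    with h0 | h1
  · rw [← cfc_zero ℝ A, cfc_eq_cfc_iff_eqOn] at h0
    simpa [f] using h0 hc
  · rw [← cfc_one ℝ A, cfc_eq_cfc_iff_eqOn] at h1
    refine eq_trace_div_card_smul_one (c := (c : 𝕜)) ?_
    rw [CFC.eq_algebraMap_of_spectrum_subset_singleton A c (fun x hx => ?_) hA.isSelfAdjoint]
    · simp [Algebra.algebraMap_eq_smul_one]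
    · simpa [f] using h1 hx

theorem commute_of_mul_mul_conjTranspose_eq [Fintype n] [DecidableEq n] [Semiring R] [StarRing R]
    {U X : Matrix n n R} (hU : Uᴴ * U = 1) (h : U * X * Uᴴ = X) : Commute X U := by
  calc X * U = U * X * Uᴴ * U := by rw [h]
    _ = U * X := by rw [Matrix.mul_assoc _ Uᴴ, hU, mul_one]

theorem traceRight_eq_trace_div_card_smul_one_of_invariant [Fintype m] [Fintype n] [DecidableEq m]
    [DecidableEq n] {ι 𝕜 : Type*} [RCLike 𝕜] {U : ι → Matrix m m 𝕜} {V : ι → Matrix n n 𝕜}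
    (hU : ∀ s, U s ∈ unitaryGroup m 𝕜) (hV : ∀ s, V s ∈ unitaryGroup n 𝕜)
    (hirr : ∀ Q : Matrix m m 𝕜, Q * Q = Q → Q.IsHermitian →
      (∀ s, Q * U s = U s * Q) → Q = 0 ∨ Q = 1)
    {M : Matrix (m × n) (m × n) 𝕜} (hM : M.IsHermitian)
    (hinv : ∀ s, (U s ⊗ₖ V s) * M * (U s ⊗ₖ V s)ᴴ = M) :
    traceRight M = (M.trace / Fintype.card m) • 1 := by
  have hcomm : ∀ s, traceRight M * U s = U s * traceRight M := fun s =>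
    commute_of_mul_mul_conjTranspose_eq (mem_unitaryGroup_iff'.mp (hU s)) <| by
      rw [← traceRight_kronecker_mul_mul_conjTranspose _ (mem_unitaryGroup_iff'.mp (hV s)), hinv s]
  have hherm : (traceRight M).IsHermitian := by
    rw [IsHermitian, conjTranspose_traceRight, hM.eq]
  rw [← trace_traceRight M]
  exact hherm.eq_trace_div_card_smul_one_of_commute hirr hcomm

theorem traceLeft_eq_trace_div_card_smul_one_of_invariant [Fintype m] [Fintype n] [DecidableEq m]
    [DecidableEq n] {ι 𝕜 : Type*} [RCLike 𝕜] {U : ι → Matrix m m 𝕜} {V : ι → Matrix n n 𝕜}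
    (hU : ∀ s, U s ∈ unitaryGroup m 𝕜) (hV : ∀ s, V s ∈ unitaryGroup n 𝕜)
    (hirr : ∀ Q : Matrix n n 𝕜, Q * Q = Q → Q.IsHermitian →
      (∀ s, Q * V s = V s * Q) → Q = 0 ∨ Q = 1)
    {M : Matrix (m × n) (m × n) 𝕜} (hM : M.IsHermitian)
    (hinv : ∀ s, (U s ⊗ₖ V s) * M * (U s ⊗ₖ V s)ᴴ = M) :
    traceLeft M = (M.trace / Fintype.card n) • 1 := by
  rw [traceLeft_eq_traceRight_submatrix_swap, ← trace_submatrix_equiv M (Equiv.prodComm n m),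
    Equiv.coe_prodComm]
  refine traceRight_eq_trace_div_card_smul_one_of_invariant hV hU hirr (hM.submatrix _) fun s => ?_
  rw [← submatrix_swap_kronecker_mul_mul_conjTranspose, hinv s]

theorem mul_mul_conjTranspose_self_mul_conjTranspose_eq [Fintype m] [Fintype n] [DecidableEq n]
    [Semiring R] [StarRing R] {K : Matrix m m R} {P : Matrix m n R} {U : Matrix n n R}
    (hKP : K * P = P * U) (hU : U * Uᴴ = 1) : K * (P * Pᴴ) * Kᴴ = P * Pᴴ := by
  calc K * (P * Pᴴ) * Kᴴ = (K * P) * (K * P)ᴴ := by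
        rw [conjTranspose_mul]; simp only [Matrix.mul_assoc]
    _ = P * (U * Uᴴ) * Pᴴ := by
        rw [hKP, conjTranspose_mul]; simp only [Matrix.mul_assoc]
    _ = P * Pᴴ := by rw [hU, Matrix.mul_one]

end Matrix

theorem equivariant_isometry_maximally_mixed_marginals_general {G : Type*} [Group G]
    (v w1 w2 : ℕ) (hv : 0 < v)
    (ρV : G →* Matrix.unitaryGroup (Fin v) ℂ)
    (ρ1 : G →* Matrix.unitaryGroup (Fin w1) ℂ)
    (ρ2 : G →* Matrix.unitaryGroup (Fin w2) ℂ)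
    (hirr1 : ∀ Q : Matrix (Fin w1) (Fin w1) ℂ, Q * Q = Q → Q.IsHermitian →
      (∀ s : G, Q * (ρ1 s : Matrix (Fin w1) (Fin w1) ℂ) =
        (ρ1 s : Matrix (Fin w1) (Fin w1) ℂ) * Q) → Q = 0 ∨ Q = 1)
    (hirr2 : ∀ Q : Matrix (Fin w2) (Fin w2) ℂ, Q * Q = Q → Q.IsHermitian →
      (∀ s : G, Q * (ρ2 s : Matrix (Fin w2) (Fin w2) ℂ) =
        (ρ2 s : Matrix (Fin w2) (Fin w2) ℂ) * Q) → Q = 0 ∨ Q = 1)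
    (P : Matrix (Fin w1 × Fin w2) (Fin v) ℂ)
    (hiso : P.conjTranspose * P = (1 : Matrix (Fin v) (Fin v) ℂ))
    (hequiv : ∀ s : G,
      (Matrix.kroneckerMap (· * ·) (ρ1 s : Matrix (Fin w1) (Fin w1) ℂ)
          (ρ2 s : Matrix (Fin w2) (Fin w2) ℂ)) * P =
        P * (ρV s : Matrix (Fin v) (Fin v) ℂ)) :
    let σ : Matrix (Fin w1 × Fin w2) (Fin w1 × Fin w2) ℂ :=
      ((v : ℂ))⁻¹ • (P * P.conjTranspose)
    (Matrix.of fun i j : Fin w1 => ∑ k : Fin w2, σ (i, k) (j, k)) =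
        ((w1 : ℂ))⁻¹ • (1 : Matrix (Fin w1) (Fin w1) ℂ) ∧
    (Matrix.of fun i j : Fin w2 => ∑ k : Fin w1, σ (k, i) (k, j)) =
        ((w2 : ℂ))⁻¹ • (1 : Matrix (Fin w2) (Fin w2) ℂ) := by
  intro σ
  have hσ_herm : σ.IsHermitian :=
    (isHermitian_mul_conjTranspose_self P).smul (IsSelfAdjoint.natCast v).inv₀
  have hσ_trace : σ.trace = 1 := by
    rw [trace_smul, trace_mul_comm, hiso, trace_one, Fintype.card_fin, smul_eq_mul,
      inv_mul_cancel₀ (Nat.cast_ne_zero.mpr hv.ne')]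
  have hσ_inv : ∀ s, (ρ1 s ⊗ₖ ρ2 s : Matrix _ _ ℂ) * σ * (ρ1 s ⊗ₖ ρ2 s : Matrix _ _ ℂ)ᴴ = σ :=
    fun s => by
      rw [Matrix.mul_smul, Matrix.smul_mul,
        mul_mul_conjTranspose_self_mul_conjTranspose_eq (hequiv s) (mem_unitaryGroup_iff.mp (ρV s).2)]
  have h1 := traceRight_eq_trace_div_card_smul_one_of_invariant (fun s => (ρ1 s).2)
    (fun s => (ρ2 s).2) hirr1 hσ_herm hσ_inv
  have h2 := traceLeft_eq_trace_div_card_smul_one_of_invariant (fun s => (ρ1 s).2)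
    (fun s => (ρ2 s).2) hirr2 hσ_herm hσ_inv
  rw [hσ_trace, Fintype.card_fin, one_div] at h1 h2
  exact ⟨h1, h2⟩

/-- an equivariant isometry `P : V → W₁ ⊗ W₂` between irreducible
unitary representations of a finite group `G` sends the maximally mixed state
on `V` to a state `σ = P P† / dim V` whose reduced states on `W₁` and `W₂`
are both maximally mixed: `Tr_{W₂} σ = Id/ w₁` and `Tr_{W₁} σ = Id / w₂`.
Irreducibility is formalized, as usual for unitary representations, by
triviality of the Hermitian projections in the commutant. -/
theorem equivariant_isometry_maximally_mixed_marginals {G : Type*} [Group G] [Fintype G]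
    (v w1 w2 : ℕ) (hv : 0 < v) (hw1 : 0 < w1) (hw2 : 0 < w2)
    (ρV : G →* Matrix.unitaryGroup (Fin v) ℂ)
    (ρ1 : G →* Matrix.unitaryGroup (Fin w1) ℂ)
    (ρ2 : G →* Matrix.unitaryGroup (Fin w2) ℂ)
    (hirrV : ∀ Q : Matrix (Fin v) (Fin v) ℂ, Q * Q = Q → Q.IsHermitian →
      (∀ s : G, Q * (ρV s : Matrix (Fin v) (Fin v) ℂ) =
        (ρV s : Matrix (Fin v) (Fin v) ℂ) * Q) → Q = 0 ∨ Q = 1)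
    (hirr1 : ∀ Q : Matrix (Fin w1) (Fin w1) ℂ, Q * Q = Q → Q.IsHermitian →
      (∀ s : G, Q * (ρ1 s : Matrix (Fin w1) (Fin w1) ℂ) =
        (ρ1 s : Matrix (Fin w1) (Fin w1) ℂ) * Q) → Q = 0 ∨ Q = 1)
    (hirr2 : ∀ Q : Matrix (Fin w2) (Fin w2) ℂ, Q * Q = Q → Q.IsHermitian →
      (∀ s : G, Q * (ρ2 s : Matrix (Fin w2) (Fin w2) ℂ) =
        (ρ2 s : Matrix (Fin w2) (Fin w2) ℂ) * Q) → Q = 0 ∨ Q = 1)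
    (P : Matrix (Fin w1 × Fin w2) (Fin v) ℂ) (hP : P ≠ 0)
    (hiso : P.conjTranspose * P = (1 : Matrix (Fin v) (Fin v) ℂ))
    (hequiv : ∀ s : G,
      (Matrix.kroneckerMap (· * ·) (ρ1 s : Matrix (Fin w1) (Fin w1) ℂ)
          (ρ2 s : Matrix (Fin w2) (Fin w2) ℂ)) * P =
        P * (ρV s : Matrix (Fin v) (Fin v) ℂ)) :
    let σ : Matrix (Fin w1 × Fin w2) (Fin w1 × Fin w2) ℂ :=
      ((v : ℂ))⁻¹ • (P * P.conjTranspose)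
    (Matrix.of fun i j : Fin w1 => ∑ k : Fin w2, σ (i, k) (j, k)) =
        ((w1 : ℂ))⁻¹ • (1 : Matrix (Fin w1) (Fin w1) ℂ) ∧
    (Matrix.of fun i j : Fin w2 => ∑ k : Fin w1, σ (k, i) (k, j)) =
        ((w2 : ℂ))⁻¹ • (1 : Matrix (Fin w2) (Fin w2) ℂ) :=
  equivariant_isometry_maximally_mixed_marginals_general v w1 w2 hv ρV ρ1 ρ2 hirr1 hirr2 P hiso
    hequiv
end
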